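/- arXiv:math/0402354 — 9 statements merged into one kernel-verified Lean document; each statement's English description precedes it below -/
import Mathlib

section
/- With m = n(n+1)/2 and Λ_n := 1/(H_n − (1/2)·ln(2m) − γ) − 12m, one has: Λ_n tends to 6/5 as n → ∞, m·(6/5 − Λ_n) tends to 19/175 as n → ∞, and m²·(Λ_n − 6/5 + 19/(175m)) tends to 13/250 as n → ∞. -/
set_option maxHeartbeats 1000000

open Real Filter Topology

namespace LodgeAux

noncomputable def Dd (n : ℕ) : ℝ :=
  (harmonic n : ℝ) - (1/2) * Real.log ((n:ℝ) * ((n:ℝ)+1)) - Real.eulerMascheroniConstant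
noncomputable def Em (w : ℝ) : ℝ := 1/(12*w) - 1/(120*w^2) + 1/(630*w^3) - 1/(1680*w^4)
noncomputable def GG (j : ℝ) : ℝ := Em (j*(j-1)/2)
noncomputable def mm (n : ℕ) : ℝ := (n:ℝ)*((n:ℝ)+1)/2
noncomputable def uu (n : ℕ) : ℝ := (mm n)⁻¹
noncomputable def AA (n : ℕ) : ℝ :=
  (13/3000 + (391/441000)*(uu n) - (19/294000)*(uu n)^2)
    / (1/12 - (uu n)/120 + (uu n)^2/630 - (uu n)^3/1680)
noncomputable def BB (n : ℕ) : ℝ := (mm n)^2 * (Em (mm n) - Dd n) / (Dd n * Em (mm n))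

theorem logpart (j : ℝ) (hj : 2 ≤ j) :
    |(1/2) * Real.log ((j+1)/(j-1)) - 1/j
      - (1/(3*j^3) + 1/(5*j^5) + 1/(7*j^7) + 1/(9*j^9))| ≤ 2 / j^11 := by
  have hj0 : (0:ℝ) < j := by linarith
  set x : ℝ := 1/j with hxdef
  have hx0 : 0 < x := by positivity
  have hx2 : x ≤ 1/2 := by rw [hxdef, div_le_div_iff₀ hj0 (by norm_num)]; linarith
  have hx1 : |x| < 1 := by rw [abs_of_pos hx0]; linarith
  have hx1' : |(-x)| < 1 := by rwa [abs_neg]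
  have h1 := Real.abs_log_sub_add_sum_range_le hx1 10
  have h2 := Real.abs_log_sub_add_sum_range_le hx1' 10
  rw [abs_neg] at h2
  have hquot : (j+1)/(j-1) = (1 - (-x))/(1 - x) := by
    rw [hxdef]; field_simp; ring
  have hlog : Real.log ((j+1)/(j-1)) = Real.log (1 - (-x)) - Real.log (1-x) := by
    rw [hquot, Real.log_div (by nlinarith) (by nlinarith)]
  have key : (1/2) * Real.log ((j+1)/(j-1)) - 1/j
      - (1/(3*j^3) + 1/(5*j^5) + 1/(7*j^7) + 1/(9*j^9))
      = (1/2) * ((∑ i ∈ Finset.range 10, (-x) ^ (i + 1) / (i + 1)) + Real.log (1 - (-x)))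
        - (1/2) * ((∑ i ∈ Finset.range 10, x ^ (i + 1) / (i + 1)) + Real.log (1 - x)) := by
    rw [hlog]
    simp only [Finset.sum_range_succ, Finset.sum_range_zero, hxdef]
    push_cast
    field_simp
    ring
  rw [key]
  have hb : |x| ^ (10+1) / (1 - |x|) ≤ 2 / j^11 := by
    rw [abs_of_pos hx0]
    have h11 : x ^ 11 = 1 / j ^ 11 := by rw [hxdef, div_pow, one_pow]
    have : 1 - x ≥ 1/2 := by linarith
    calc x ^ (10+1) / (1 - x) ≤ x ^ 11 / (1/2) := by
          apply div_le_div_of_nonneg_left (by positivity) (by norm_num) this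
      _ = 2 / j ^ 11 := by rw [h11]; ring
  calc |(1/2) * ((∑ i ∈ Finset.range 10, (-x) ^ (i + 1) / (i + 1)) + Real.log (1 - (-x)))
        - (1/2) * ((∑ i ∈ Finset.range 10, x ^ (i + 1) / (i + 1)) + Real.log (1 - x))|
      ≤ (1/2) * |(∑ i ∈ Finset.range 10, (-x) ^ (i + 1) / (i + 1)) + Real.log (1 - (-x))|
        + (1/2) * |(∑ i ∈ Finset.range 10, x ^ (i + 1) / (i + 1)) + Real.log (1 - x)| := by
        refine (abs_sub _ _).trans (le_of_eq ?_)
        rw [abs_mul, abs_mul]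
        have h12 : |(1/2 : ℝ)| = 1/2 := by norm_num
        rw [h12]
    _ ≤ (1/2) * (|x| ^ (10+1) / (1 - |x|)) + (1/2) * (|x| ^ (10+1) / (1 - |x|)) := by
        gcongr
    _ ≤ 2 / j ^ 11 := by linarith

noncomputable def qt (j : ℝ) : ℝ :=
  (1/21)*j^18 + (1/105)*j^16 - (428/315)*j^14 + (340/63)*j^12 - (218/21)*j^10
  + (746/63)*j^8 - (2668/315)*j^6 + (132/35)*j^4 - (61/63)*j^2 + 1/9

theorem qt_abs_le (j : ℝ) (hj : 2 ≤ j) : |qt j| ≤ 43 * j^18 := by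
  have ht : (4:ℝ) ≤ j^2 := by nlinarith
  obtain ⟨s, hs0, hs⟩ : ∃ s, 0 ≤ s ∧ s = j^2 - 4 := ⟨j^2-4, by nlinarith, rfl⟩
  rw [abs_le]
  constructor
  · have key : qt j + 43*j^18 =
        (904/21)*s^9 + (162721/105)*s^8 + (7810228/315)*s^7 + (4859308/21)*s^6
        + (48588426/35)*s^5 + (38866818/7)*s^4 + (518172756/35)*s^3
        + (888212916/35)*s^2 + (177627339/7)*s + 394697063/35 := by
      rw [hs]; simp only [qt]; ring
    nlinarith [key, pow_nonneg hs0 9, pow_nonneg hs0 8, pow_nonneg hs0 7, pow_nonneg hs0 6,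
      pow_nonneg hs0 5, pow_nonneg hs0 4, pow_nonneg hs0 3, pow_nonneg hs0 2, hs0]
  · have key : 43*j^18 - qt j =
        (902/21)*s^9 + (162359/105)*s^8 + (7793612/315)*s^7 + (4849748/21)*s^6
        + (48502134/35)*s^5 + (38805630/7)*s^4 + (517459884/35)*s^3
        + (887157324/35)*s^2 + (177446709/7)*s + 394356377/35 := by
      rw [hs]; simp only [qt]; ring
    nlinarith [key, pow_nonneg hs0 9, pow_nonneg hs0 8, pow_nonneg hs0 7, pow_nonneg hs0 6,
      pow_nonneg hs0 5, pow_nonneg hs0 4, pow_nonneg hs0 3, pow_nonneg hs0 2, hs0]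

theorem ratpart (j : ℝ) (hj : 2 ≤ j) :
    |(1/(3*j^3) + 1/(5*j^5) + 1/(7*j^7) + 1/(9*j^9)) - (GG j - GG (j+1))| ≤ 1000 / j^11 := by
  have hj0 : (0:ℝ) < j := by linarith
  have h1 : (0:ℝ) < j - 1 := by linarith
  have h2 : (0:ℝ) < j + 1 := by linarith
  have ht : (4:ℝ) ≤ j^2 := by nlinarith
  have hsq : (0:ℝ) < j^2 - 1 := by nlinarith
  have heq : (1/(3*j^3) + 1/(5*j^5) + 1/(7*j^7) + 1/(9*j^9)) - (GG j - GG (j+1))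
      = qt j / (j^9 * (j^2-1)^10) := by
    simp only [GG, Em, qt]
    have e1 : j*(j-1)/2 ≠ 0 := by positivity
    have e2 : (j+1)*((j+1)-1)/2 ≠ 0 := by
      have : (j+1)*((j+1)-1)/2 = (j+1)*j/2 := by ring
      rw [this]; positivity
    have e3 : j^2 - 1 ≠ 0 := ne_of_gt hsq
    rw [show (j+1)-1 = j by ring]
    field_simp
    ring
  rw [heq, abs_div, abs_of_pos (by positivity : (0:ℝ) < j^9 * (j^2-1)^10),
    div_le_div_iff₀ (by positivity) (by positivity)]
  have hqt := qt_abs_le j hj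
  have h34 : (3/4)*j^2 ≤ j^2 - 1 := by nlinarith
  have hp : ((3/4)*j^2)^10 ≤ (j^2-1)^10 := by
    apply pow_le_pow_left₀ (by positivity) h34
  calc |qt j| * j^11 ≤ (43 * j^18) * j^11 := by
        apply mul_le_mul_of_nonneg_right hqt (by positivity)
    _ = 43 * j^29 := by ring
    _ ≤ (59049000/1048576) * j^29 :=
        mul_le_mul_of_nonneg_right (by norm_num) (pow_nonneg hj0.le 29)
    _ = 1000 * ((3/4)*j^2)^10 * j^9 := by ring
    _ ≤ 1000 * (j^2-1)^10 * j^9 := by nlinarith [hp, pow_pos hj0 9]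
    _ = 1000 * (j^9 * (j^2-1)^10) := by ring


theorem termfull (j : ℝ) (hj : 2 ≤ j) :
    |((1/2) * Real.log ((j+1)/(j-1)) - 1/j) - (GG j - GG (j+1))| ≤ 1002 / j^11 := by
  have h1 := logpart j hj
  have h2 := ratpart j hj
  have h3 : (2:ℝ)/j^11 + 1000/j^11 = 1002/j^11 := by ring
  have h4 := abs_sub_le ((1/2) * Real.log ((j+1)/(j-1)) - 1/j)
    (1/(3*j^3) + 1/(5*j^5) + 1/(7*j^7) + 1/(9*j^9)) (GG j - GG (j+1))
  have h5 : (1/2) * Real.log ((j+1)/(j-1)) - 1/j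
      - (1/(3*j^3) + 1/(5*j^5) + 1/(7*j^7) + 1/(9*j^9))
      = ((1/2) * Real.log ((j+1)/(j-1)) - 1/j)
        - (1/(3*j^3) + 1/(5*j^5) + 1/(7*j^7) + 1/(9*j^9)) := by ring
  rw [h5] at h1
  linarith

theorem step (k : ℕ) (hk : 1 ≤ k) :
    Dd k - Dd (k+1) = (1/2) * Real.log (((k:ℝ)+2)/(k:ℝ)) - 1/((k:ℝ)+1) := by
  have hk0 : (0:ℝ) < (k:ℝ) := by exact_mod_cast hk
  have hh : (harmonic (k+1) : ℝ) = (harmonic k : ℝ) + 1/((k:ℝ)+1) := by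
    rw [harmonic_succ]; push_cast; ring
  simp only [Dd, hh]
  push_cast
  rw [Real.log_mul (by positivity) (by positivity), Real.log_mul (by positivity) (by positivity),
    Real.log_div (by positivity) (by positivity)]
  ring

theorem tele (n : ℕ) (hn : 1 ≤ n) : ∀ N, n ≤ N →
    |Dd n - Dd N - (GG ((n:ℝ)+1) - GG ((N:ℝ)+1))|
      ≤ 1002/((n:ℝ)+1)^9 * (1/(n:ℝ) - 1/(N:ℝ)) := by
  have hn0 : (0:ℝ) < (n:ℝ) := by exact_mod_cast hn
  refine Nat.le_induction ?_ ?_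
  · simp
  · intro N hN ih
    have hN1 : 1 ≤ N := le_trans hn hN
    have hN0 : (0:ℝ) < (N:ℝ) := by exact_mod_cast hN1
    have hnN : (n:ℝ) ≤ (N:ℝ) := by exact_mod_cast hN
    set j : ℝ := (N:ℝ)+1 with hj
    have hj2 : 2 ≤ j := by rw [hj]; linarith [show (1:ℝ) ≤ (N:ℝ) by exact_mod_cast hN1]
    have hstep : Dd N - Dd (N+1) = ((1/2) * Real.log ((j+1)/(j-1)) - 1/j) := by
      rw [step N hN1, hj]
      ring_nf
    have hterm := termfull j hj2
    have hcast : ((N:ℝ)+1+1) = j + 1 := by rw [hj]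
    have hsplit : Dd n - Dd (N+1) - (GG ((n:ℝ)+1) - GG (((N+1:ℕ):ℝ)+1))
        = (Dd n - Dd N - (GG ((n:ℝ)+1) - GG ((N:ℝ)+1)))
          + ((Dd N - Dd (N+1)) - (GG j - GG (j+1))) := by
      push_cast
      rw [hj]
      push_cast
      ring_nf
    rw [hsplit]
    have hbound : 1002 / j^11 ≤ 1002/((n:ℝ)+1)^9 * (1/(N:ℝ) - 1/((N:ℝ)+1)) := by
      have h1 : 1/(N:ℝ) - 1/((N:ℝ)+1) = 1/((N:ℝ)*((N:ℝ)+1)) := by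
        field_simp; ring
      rw [h1, div_mul_div_comm, mul_one]
      apply div_le_div_of_nonneg_left (by norm_num) (by positivity)
      calc ((n:ℝ)+1)^9 * ((N:ℝ)*((N:ℝ)+1)) ≤ ((N:ℝ)+1)^9 * (((N:ℝ)+1)*((N:ℝ)+1)) := by
            have h2 : (n:ℝ)+1 ≤ (N:ℝ)+1 := by linarith
            have h3 : ((n:ℝ)+1)^9 ≤ ((N:ℝ)+1)^9 := pow_le_pow_left₀ (by positivity) h2 9
            have h4 : (N:ℝ)*((N:ℝ)+1) ≤ ((N:ℝ)+1)*((N:ℝ)+1) := by nlinarith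
            exact mul_le_mul h3 h4 (by positivity) (by positivity)
        _ = ((N:ℝ)+1)^11 := by ring
        _ = j^11 := by rw [hj]
    have hfin : 1002/((n:ℝ)+1)^9 * (1/(n:ℝ) - 1/(N:ℝ))
        + 1002/((n:ℝ)+1)^9 * (1/(N:ℝ) - 1/((N:ℝ)+1))
        = 1002/((n:ℝ)+1)^9 * (1/(n:ℝ) - 1/(((N+1:ℕ)):ℝ)) := by push_cast; ring
    rw [show Dd N - Dd (N + 1) - (GG j - GG (j+1))
      = (1/2) * Real.log ((j+1)/(j-1)) - 1/j - (GG j - GG (j+1)) by rw [hstep]]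
    exact (abs_add_le _ _).trans (le_trans (add_le_add ih (hterm.trans hbound)) hfin.le)

theorem Dd_to_zero : Tendsto Dd atTop (𝓝 0) := by
  have h1 : Tendsto (fun N : ℕ => ((harmonic N : ℝ) - Real.log N) - Real.eulerMascheroniConstant)
      atTop (𝓝 0) := by
    have := Real.tendsto_harmonic_sub_log.sub_const Real.eulerMascheroniConstant
    simpa using this
  have h2 : Tendsto (fun N : ℕ => Real.log (1 + 1/(N:ℝ))) atTop (𝓝 0) := by
    have hb : Tendsto (fun N : ℕ => 1 + 1/(N:ℝ)) atTop (𝓝 1) := by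
      simpa using (tendsto_const_nhds (x := (1:ℝ)) (f := atTop (α := ℕ))).add tendsto_one_div_atTop_nhds_zero_nat
    have := (Real.continuousAt_log one_ne_zero).tendsto.comp hb
    rw [Real.log_one] at this; exact this
  have h3 : Tendsto (fun N : ℕ => ((harmonic N : ℝ) - Real.log N)
      - Real.eulerMascheroniConstant - (1/2) * Real.log (1 + 1/(N:ℝ))) atTop (𝓝 0) := by
    have := h1.sub (h2.const_mul (1/2))
    simpa using this
  apply h3.congr'
  filter_upwards [eventually_ge_atTop 1] with N hN
  have hN0 : (0:ℝ) < (N:ℝ) := by exact_mod_cast hN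
  simp only [Dd]
  rw [Real.log_mul (by positivity) (by positivity),
    show (1:ℝ) + 1/(N:ℝ) = ((N:ℝ)+1)/(N:ℝ) by field_simp,
    Real.log_div (by positivity) (by positivity)]
  ring

theorem Em_to_zero : Tendsto Em atTop (𝓝 0) := by
  have t : ∀ (c : ℝ), 0 < c → ∀ k : ℕ, k ≠ 0 → Tendsto (fun w : ℝ => 1/(c*w^k)) atTop (𝓝 0) := by
    intro c hc k hk
    have h := ((tendsto_pow_atTop hk).inv_tendsto_atTop).const_mul (c⁻¹)
    rw [mul_zero] at h
    exact h.congr fun w => by simp only [Pi.inv_apply]; rw [one_div, mul_inv]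
  have T := (((t 12 (by norm_num) 1 one_ne_zero).sub (t 120 (by norm_num) 2 (by norm_num))).add
    (t 630 (by norm_num) 3 (by norm_num))).sub (t 1680 (by norm_num) 4 (by norm_num))
  rw [show (0:ℝ) - 0 + 0 - 0 = 0 by norm_num] at T
  exact T.congr fun w => by simp only [Em, pow_one]

theorem GG_to_zero : Tendsto (fun N : ℕ => GG ((N:ℝ)+1)) atTop (𝓝 0) := by
  have hw : Tendsto (fun N : ℕ => ((N:ℝ)+1)*(((N:ℝ)+1)-1)/2) atTop atTop := by
    apply tendsto_atTop_mono _ tendsto_natCast_atTop_atTop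
    intro N
    rcases Nat.eq_zero_or_pos N with h | h
    · simp [h]
    · have h1 : (1:ℝ) ≤ (N:ℝ) := by exact_mod_cast h
      nlinarith
  exact Em_to_zero.comp hw

theorem key_bound (n : ℕ) (hn : 1 ≤ n) :
    |Dd n - Em ((n:ℝ)*((n:ℝ)+1)/2)| ≤ 1002 / (n:ℝ)^10 := by
  have hn0 : (0:ℝ) < (n:ℝ) := by exact_mod_cast hn
  have hGG : GG ((n:ℝ)+1) = Em ((n:ℝ)*((n:ℝ)+1)/2) := by
    simp only [GG]; congr 1; ring
  have hlim : Tendsto (fun N : ℕ => |Dd n - Dd N - (GG ((n:ℝ)+1) - GG ((N:ℝ)+1))|)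
      atTop (𝓝 |Dd n - GG ((n:ℝ)+1)|) := by
    have h1 : Tendsto (fun _ : ℕ => Dd n) atTop (𝓝 (Dd n)) := tendsto_const_nhds
    have h2 : Tendsto (fun _ : ℕ => GG ((n:ℝ)+1)) atTop (𝓝 (GG ((n:ℝ)+1))) := tendsto_const_nhds
    have := ((h1.sub Dd_to_zero).sub (h2.sub GG_to_zero)).abs
    simpa using this
  have hb : |Dd n - GG ((n:ℝ)+1)| ≤ 1002/((n:ℝ)+1)^9 * (1/(n:ℝ)) := by
    apply le_of_tendsto hlim
    filter_upwards [eventually_ge_atTop n] with N hN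
    refine (tele n hn N hN).trans ?_
    have hN0 : (0:ℝ) < (N:ℝ) := by
      have : 1 ≤ N := le_trans hn hN
      exact_mod_cast this
    have : (0:ℝ) < 1/(N:ℝ) := by positivity
    have hc : (0:ℝ) ≤ 1002/((n:ℝ)+1)^9 := by positivity
    nlinarith
  rw [← hGG]
  refine hb.trans ?_
  rw [div_mul_div_comm, mul_one]
  apply div_le_div_of_nonneg_left (by norm_num) (by positivity)
  calc (n:ℝ)^10 = (n:ℝ)^9 * (n:ℝ) := by ring
    _ ≤ ((n:ℝ)+1)^9 * (n:ℝ) := by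
        have : ((n:ℝ))^9 ≤ ((n:ℝ)+1)^9 := pow_le_pow_left₀ (by positivity) (by linarith) 9
        nlinarith

theorem den_lb (u : ℝ) (h0 : 0 < u) (h10 : u ≤ 1/10) :
    (1:ℝ)/24 ≤ 1/12 - u/120 + u^2/630 - u^3/1680 := by
  nlinarith [pow_le_pow_left₀ h0.le h10 3, pow_nonneg h0.le 2]

theorem Em_eq (M : ℝ) (hM : 0 < M) :
    Em M = M⁻¹ * (1/12 - M⁻¹/120 + (M⁻¹)^2/630 - (M⁻¹)^3/1680) := by
  simp only [Em]
  field_simp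


theorem mm_atTop : Tendsto mm atTop atTop := by
  apply tendsto_atTop_mono _ tendsto_natCast_atTop_atTop
  intro N
  rcases Nat.eq_zero_or_pos N with h | h
  · simp [h, mm]
  · have h1 : (1:ℝ) ≤ (N:ℝ) := by exact_mod_cast h
    simp only [mm]; nlinarith

theorem uu_to_zero : Tendsto uu atTop (𝓝 0) := mm_atTop.inv_tendsto_atTop

theorem hA : Tendsto AA atTop (𝓝 (13/250)) := by
  have hnum : Tendsto (fun n => 13/3000 + (391/441000)*(uu n) - (19/294000)*(uu n)^2)
      atTop (𝓝 (13/3000 + (391/441000)*0 - (19/294000)*0^2)) :=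
    (tendsto_const_nhds.add (uu_to_zero.const_mul _)).sub ((uu_to_zero.pow 2).const_mul _)
  have hden : Tendsto (fun n => 1/12 - (uu n)/120 + (uu n)^2/630 - (uu n)^3/1680)
      atTop (𝓝 (1/12 - 0/120 + 0^2/630 - 0^3/1680)) :=
    ((tendsto_const_nhds.sub (uu_to_zero.div_const _)).add
      ((uu_to_zero.pow 2).div_const _)).sub ((uu_to_zero.pow 3).div_const _)
  norm_num at hnum hden
  have := hnum.div hden (by norm_num)
  norm_num at this
  exact this

theorem hB : Tendsto BB atTop (𝓝 0) := by
  have hg : Tendsto (fun n : ℕ => 1154304/(n:ℝ)^2) atTop (𝓝 0) := by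
    have h := (((tendsto_pow_atTop (two_ne_zero)).comp
      tendsto_natCast_atTop_atTop).inv_tendsto_atTop).const_mul (1154304:ℝ)
    rw [mul_zero] at h
    exact h.congr fun n => by simp [Function.comp, one_div, div_eq_mul_inv]
  apply squeeze_zero_norm' _ hg
  filter_upwards [eventually_ge_atTop 4] with n hn4
  have hn1 : 1 ≤ n := le_trans (by norm_num) hn4
  have hn0 : (0:ℝ) < (n:ℝ) := by exact_mod_cast hn1
  have hn4' : (4:ℝ) ≤ (n:ℝ) := by exact_mod_cast hn4
  have hm0 : 0 < mm n := by simp only [mm]; positivity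
  have hm10 : 10 ≤ mm n := by simp only [mm]; nlinarith
  have hmn2 : mm n ≤ (n:ℝ)^2 := by simp only [mm]; nlinarith
  have hu0 : 0 < uu n := by simp only [uu]; positivity
  have hu10 : uu n ≤ 1/10 := by
    simp only [uu]
    rw [show (1:ℝ)/10 = (10:ℝ)⁻¹ by norm_num]
    exact inv_anti₀ (by norm_num) hm10
  have hE_eq : Em (mm n) = uu n * (1/12 - uu n/120 + (uu n)^2/630 - (uu n)^3/1680) := by
    simp only [uu]; exact Em_eq (mm n) hm0
  have hden_lb : (1:ℝ)/24 ≤ 1/12 - uu n/120 + (uu n)^2/630 - (uu n)^3/1680 :=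
    den_lb (uu n) hu0 hu10
  have huu24 : 1/(24*mm n) = uu n/24 := by
    simp only [uu]; rw [one_div, mul_inv, inv_eq_one_div 24]; ring
  have hE_lb : 1/(24*mm n) ≤ Em (mm n) := by
    rw [hE_eq, huu24]
    nlinarith [hu0, hden_lb]
  have hE_pos : 0 < Em (mm n) := lt_of_lt_of_le (by positivity) hE_lb
  have hr := key_bound n hn1
  rw [show (n:ℝ)*((n:ℝ)+1)/2 = mm n from rfl] at hr
  have habs := abs_le.mp hr
  have h2 : 1/(24*(n:ℝ)^2) ≤ 1/(24*mm n) := by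
    apply div_le_div_of_nonneg_left (by norm_num) (by positivity)
    nlinarith
  have hn8 : (65536:ℝ) ≤ (n:ℝ)^8 := by
    have := pow_le_pow_left₀ (by norm_num : (0:ℝ) ≤ 4) hn4' 8
    norm_num at this
    linarith
  have h3 : 1002/(n:ℝ)^10 ≤ 1/(48*(n:ℝ)^2) := by
    rw [div_le_div_iff₀ (by positivity) (by positivity)]
    nlinarith [mul_le_mul_of_nonneg_right hn8 (by positivity : (0:ℝ) ≤ (n:ℝ)^2),
      pow_pos hn0 2]
  have h4 : 1/(24*(n:ℝ)^2) = 2*(1/(48*(n:ℝ)^2)) := by field_simp; ring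
  have hD_lb : 1/(48*(n:ℝ)^2) ≤ Dd n := by linarith
  have hD_pos : 0 < Dd n := lt_of_lt_of_le (by positivity) hD_lb
  have hDE : 0 < Dd n * Em (mm n) := mul_pos hD_pos hE_pos
  have hnum_le : (mm n)^2 * |Em (mm n) - Dd n| ≤ ((n:ℝ)^2)^2 * (1002/(n:ℝ)^10) := by
    apply mul_le_mul _ _ (abs_nonneg _) (by positivity)
    · exact pow_le_pow_left₀ hm0.le hmn2 2
    · rw [abs_sub_comm]; exact hr
  have hden_le : (1/(48*(n:ℝ)^2))*(1/(24*(n:ℝ)^2)) ≤ Dd n * Em (mm n) := by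
    exact mul_le_mul hD_lb (le_trans h2 hE_lb) (by positivity) hD_pos.le
  calc ‖BB n‖ = (mm n)^2 * |Em (mm n) - Dd n| / (Dd n * Em (mm n)) := by
        rw [Real.norm_eq_abs, BB, abs_div, abs_of_pos hDE, abs_mul,
          abs_of_pos (pow_pos hm0 2)]
    _ ≤ ((n:ℝ)^2)^2 * (1002/(n:ℝ)^10) / ((1/(48*(n:ℝ)^2))*(1/(24*(n:ℝ)^2))) :=
        div_le_div₀ (by positivity) hnum_le (by positivity) hden_le
    _ = 1154304/(n:ℝ)^2 := by
        field_simp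
        ring

theorem facts (n : ℕ) (hn4 : 4 ≤ n) :
    0 < mm n ∧ 0 < Em (mm n) ∧ 0 < Dd n := by
  have hn1 : 1 ≤ n := le_trans (by norm_num) hn4
  have hn0 : (0:ℝ) < (n:ℝ) := by exact_mod_cast hn1
  have hn4' : (4:ℝ) ≤ (n:ℝ) := by exact_mod_cast hn4
  have hm0 : 0 < mm n := by simp only [mm]; positivity
  have hm10 : 10 ≤ mm n := by simp only [mm]; nlinarith
  have hmn2 : mm n ≤ (n:ℝ)^2 := by simp only [mm]; nlinarith
  have hu0 : 0 < uu n := by simp only [uu]; positivity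
  have hu10 : uu n ≤ 1/10 := by
    simp only [uu]
    rw [show (1:ℝ)/10 = (10:ℝ)⁻¹ by norm_num]
    exact inv_anti₀ (by norm_num) hm10
  have hE_eq : Em (mm n) = uu n * (1/12 - uu n/120 + (uu n)^2/630 - (uu n)^3/1680) := by
    simp only [uu]; exact Em_eq (mm n) hm0
  have hden_lb := den_lb (uu n) hu0 hu10
  have huu24 : 1/(24*mm n) = uu n/24 := by
    simp only [uu]; rw [one_div, mul_inv, inv_eq_one_div 24]; ring
  have hE_lb : 1/(24*mm n) ≤ Em (mm n) := by
    rw [hE_eq, huu24]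
    nlinarith [hu0, hden_lb]
  have hE_pos : 0 < Em (mm n) := lt_of_lt_of_le (by positivity) hE_lb
  have hr := key_bound n hn1
  rw [show (n:ℝ)*((n:ℝ)+1)/2 = mm n from rfl] at hr
  have habs := abs_le.mp hr
  have h2 : 1/(24*(n:ℝ)^2) ≤ 1/(24*mm n) := by
    apply div_le_div_of_nonneg_left (by norm_num) (by positivity)
    nlinarith
  have hn8 : (65536:ℝ) ≤ (n:ℝ)^8 := by
    have := pow_le_pow_left₀ (by norm_num : (0:ℝ) ≤ 4) hn4' 8
    norm_num at this
    linarith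
  have h3 : 1002/(n:ℝ)^10 ≤ 1/(48*(n:ℝ)^2) := by
    rw [div_le_div_iff₀ (by positivity) (by positivity)]
    nlinarith [mul_le_mul_of_nonneg_right hn8 (by positivity : (0:ℝ) ≤ (n:ℝ)^2),
      pow_pos hn0 2]
  have h4 : 1/(24*(n:ℝ)^2) = 2*(1/(48*(n:ℝ)^2)) := by field_simp; ring
  have hD_lb : 1/(48*(n:ℝ)^2) ≤ Dd n := by linarith
  exact ⟨hm0, hE_pos, lt_of_lt_of_le (by positivity) hD_lb⟩

theorem main3 : Tendsto (fun n => (mm n)^2 * (1/(Dd n) - 12*(mm n) - 6/5 + 19/(175*(mm n))))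
    atTop (𝓝 (13/250)) := by
  have h := hA.add hB
  rw [add_zero] at h
  apply h.congr'
  filter_upwards [eventually_ge_atTop 4] with n hn4
  obtain ⟨hm0, hE_pos, hD_pos⟩ := facts n hn4
  have hn4' : (4:ℝ) ≤ (n:ℝ) := by exact_mod_cast hn4
  have hm10 : 10 ≤ mm n := by simp only [mm]; nlinarith
  have hP_lb : (mm n)^3/24 ≤ (mm n)^3/12 - (mm n)^2/120 + (mm n)/630 - 1/1680 := by
    nlinarith [hm10, sq_nonneg (mm n), pow_le_pow_left₀ (by norm_num : (0:ℝ) ≤ 10) hm10 3,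
      mul_le_mul_of_nonneg_left hm10 (by positivity : (0:ℝ) ≤ (mm n)^2)]
  have hP_pos : 0 < (mm n)^3/12 - (mm n)^2/120 + (mm n)/630 - 1/1680 :=
    lt_of_lt_of_le (by positivity) hP_lb
  have hEm_poly : Em (mm n) = ((mm n)^3/12 - (mm n)^2/120 + (mm n)/630 - 1/1680)/(mm n)^4 := by
    simp only [Em]
    field_simp
  have hAA_eq : AA n = (13/3000*(mm n)^3 + 391/441000*(mm n)^2 - 19/294000*(mm n))
      / ((mm n)^3/12 - (mm n)^2/120 + (mm n)/630 - 1/1680) := by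
    simp only [AA, uu]
    rw [div_eq_div_iff _ hP_pos.ne']
    · field_simp
    · intro hx
      have hden_lb := den_lb ((mm n)⁻¹) (by positivity)
        (by
          rw [show (1:ℝ)/10 = (10:ℝ)⁻¹ by norm_num]
          exact inv_anti₀ (by norm_num) hm10)
      rw [hx] at hden_lb; norm_num at hden_lb
  simp only [BB]
  rw [hAA_eq, hEm_poly]
  rw [div_add_div _ _ hP_pos.ne' (by positivity : (Dd n * (((mm n)^3/12 - (mm n)^2/120 + (mm n)/630 - 1/1680)/(mm n)^4)) ≠ 0)]
  rw [div_eq_iff (by positivity)]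
  field_simp
  ring

end LodgeAux

open LodgeAux

/-- Asymptotics of `Λₙ := 1/(Hₙ − (1/2)ln(2m) − γ) − 12m`:
`Λₙ → 6/5`, `m·(6/5 − Λₙ) → 19/175`, and `m²·(Λₙ − 6/5 + 19/(175m)) → 13/250`. -/
theorem lodge_Lambda_asymptotics :
    (Tendsto (fun n : ℕ =>
        1 / ((harmonic n : ℝ) - (1 / 2) * Real.log (2 * ((n : ℝ) * (n + 1) / 2))
            - Real.eulerMascheroniConstant) - 12 * ((n : ℝ) * (n + 1) / 2))
      atTop (𝓝 (6 / 5))) ∧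
    (Tendsto (fun n : ℕ =>
        ((n : ℝ) * (n + 1) / 2) *
          (6 / 5 -
            (1 / ((harmonic n : ℝ) - (1 / 2) * Real.log (2 * ((n : ℝ) * (n + 1) / 2))
              - Real.eulerMascheroniConstant) - 12 * ((n : ℝ) * (n + 1) / 2))))
      atTop (𝓝 (19 / 175))) ∧
    (Tendsto (fun n : ℕ =>
        ((n : ℝ) * (n + 1) / 2) ^ 2 *
          ((1 / ((harmonic n : ℝ) - (1 / 2) * Real.log (2 * ((n : ℝ) * (n + 1) / 2))
              - Real.eulerMascheroniConstant) - 12 * ((n : ℝ) * (n + 1) / 2))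
            - 6 / 5 + 19 / (175 * ((n : ℝ) * (n + 1) / 2))))
      atTop (𝓝 (13 / 250))) := by
  have hDd : ∀ n : ℕ, (harmonic n : ℝ) - (1 / 2) * Real.log (2 * ((n : ℝ) * ((n:ℝ) + 1) / 2))
      - Real.eulerMascheroniConstant = Dd n := by
    intro n
    simp only [Dd]
    rw [show (2:ℝ) * ((n : ℝ) * ((n:ℝ) + 1) / 2) = (n:ℝ) * ((n:ℝ)+1) by ring]
  have hmm : ∀ n : ℕ, (n : ℝ) * ((n:ℝ) + 1) / 2 = mm n := fun n => rfl
  have hm_ne : ∀ᶠ n : ℕ in atTop, mm n ≠ 0 := by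
    filter_upwards [eventually_ge_atTop 1] with n hn
    have hn0 : (0:ℝ) < (n:ℝ) := by exact_mod_cast hn
    simp only [mm]; positivity
  refine ⟨?_, ?_, ?_⟩
  · have h2 := main3.mul (uu_to_zero.pow 2)
    have htot := (h2.add_const (6/5)).sub (uu_to_zero.const_mul (19/175))
    norm_num at htot
    apply htot.congr'
    filter_upwards [hm_ne] with n hmne
    simp only [hDd]
    simp only [hmm]
    simp only [uu]
    field_simp
    ring
  · have h1 := main3.mul uu_to_zero
    have htot := (tendsto_const_nhds (x := (19:ℝ)/175) (f := atTop (α := ℕ))).sub h1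
    norm_num at htot
    apply htot.congr'
    filter_upwards [hm_ne] with n hmne
    simp only [hDd]
    simp only [hmm]
    simp only [uu]
    field_simp
    ring
  · apply main3.congr
    intro n
    simp only [hDd]
    simp only [hmm]
end

section
/- For every positive integer n, with m = n(n+1)/2, there exists a real number c_n with 0 < c_n < 1 such that H_n = (1/2)·ln(2m) + γ + c_n/(12m); equivalently, 0 < H_n − (1/2)·ln(2m) − γ < 1/(12m). -/
open Real Set Filter

lemma cesaro_ineqA {x : ℝ} (hx0 : 0 < x) (hx1 : x < 1) :
    2 * x < Real.log (1 + x) - Real.log (1 - x) := by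
  set f : ℝ → ℝ := fun y => Real.log (1 + y) - Real.log (1 - y) - 2 * y with hf
  have hderiv : ∀ y ∈ Ico (0:ℝ) 1, HasDerivAt f (1/(1+y) + 1/(1-y) - 2) y := by
    intro y hy
    have h1 : (0:ℝ) < 1 + y := by linarith [hy.1]
    have h2 : (0:ℝ) < 1 - y := by linarith [hy.2]
    have d1 : HasDerivAt (fun y : ℝ => Real.log (1 + y)) (1/(1+y)) y := by
      simpa using (((hasDerivAt_id y).const_add 1).log h1.ne')
    have d2 : HasDerivAt (fun y : ℝ => Real.log (1 - y)) (-(1/(1-y))) y := by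
      have : HasDerivAt (fun y : ℝ => 1 - y) (-1) y := by
        simpa using ((hasDerivAt_id y).const_sub 1)
      simpa [neg_div] using this.log h2.ne'
    have d3 : HasDerivAt (fun y : ℝ => 2 * y) 2 y := by
      simpa using (hasDerivAt_id y).const_mul 2
    have := (d1.sub d2).sub d3
    exact this.congr_deriv (by ring)
  have hmono : StrictMonoOn f (Ico 0 1) := by
    apply strictMonoOn_of_deriv_pos (convex_Ico 0 1)
    · exact fun y hy => (hderiv y hy).continuousAt.continuousWithinAt
    · intro y hy
      rw [interior_Ico] at hy
      rw [(hderiv y (Ioo_subset_Ico_self hy)).deriv]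
      have h1 : (0:ℝ) < 1 + y := by linarith [hy.1]
      have h2 : (0:ℝ) < 1 - y := by linarith [hy.2]
      have : 1/(1+y) + 1/(1-y) - 2 = 2*y^2/((1+y)*(1-y)) := by
        field_simp; ring
      rw [this]
      exact div_pos (by nlinarith [hy.1]) (mul_pos h1 h2)
  have h0 : f 0 = 0 := by simp [hf]
  have := hmono (by simp : (0:ℝ) ∈ Ico (0:ℝ) 1) ⟨hx0.le, hx1⟩ hx0
  rw [h0] at this
  simp only [hf] at this
  linarith

lemma cesaro_ineqB {x : ℝ} (hx0 : 0 < x) (hx1 : x < 1) :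
    Real.log (1 + x) - Real.log (1 - x) < 2 * x + 2 * x^3 / (3 * (1 - x^2)) := by
  set g : ℝ → ℝ := fun y => 2 * y + 2 * y^3 / (3 * (1 - y^2))
    - (Real.log (1 + y) - Real.log (1 - y)) with hg
  have hderiv : ∀ y ∈ Ico (0:ℝ) 1, HasDerivAt g
      (2 + (6*y^2 * (3*(1-y^2)) - 2*y^3 * (3*(-2*y))) / (3*(1-y^2))^2
        - (1/(1+y) + 1/(1-y))) y := by
    intro y hy
    have h1 : (0:ℝ) < 1 + y := by linarith [hy.1]
    have h2 : (0:ℝ) < 1 - y := by linarith [hy.2]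
    have hv : (3:ℝ) * (1 - y^2) ≠ 0 := by
      have : (0:ℝ) < 1 - y^2 := by nlinarith [hy.1, hy.2]
      positivity
    have d1 : HasDerivAt (fun y : ℝ => Real.log (1 + y)) (1/(1+y)) y := by
      simpa using (((hasDerivAt_id y).const_add 1).log h1.ne')
    have d2 : HasDerivAt (fun y : ℝ => Real.log (1 - y)) (-(1/(1-y))) y := by
      have : HasDerivAt (fun y : ℝ => 1 - y) (-1) y := by
        simpa using ((hasDerivAt_id y).const_sub 1)
      simpa [neg_div] using this.log h2.ne'
    have d3 : HasDerivAt (fun y : ℝ => 2 * y) 2 y := by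
      simpa using (hasDerivAt_id y).const_mul 2
    have du : HasDerivAt (fun y : ℝ => 2 * y^3) (6*y^2) y := by
      have := (hasDerivAt_pow 3 y).const_mul 2
      exact this.congr_deriv (by norm_num; ring)
    have dv : HasDerivAt (fun y : ℝ => 3 * (1 - y^2)) (3*(-2*y)) y := by
      have : HasDerivAt (fun y : ℝ => 1 - y^2) (-(2*y)) y := by
        simpa using ((hasDerivAt_pow 2 y).const_sub 1)
      have := this.const_mul 3
      exact this.congr_deriv (by ring)
    have dq := du.div dv hv
    have := (d3.add dq).sub (d1.sub d2)
    exact this.congr_deriv (by ring)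
  have hmono : StrictMonoOn g (Ico 0 1) := by
    apply strictMonoOn_of_deriv_pos (convex_Ico 0 1)
    · exact fun y hy => (hderiv y hy).continuousAt.continuousWithinAt
    · intro y hy
      rw [interior_Ico] at hy
      rw [(hderiv y (Ioo_subset_Ico_self hy)).deriv]
      have h1 : (0:ℝ) < 1 + y := by linarith [hy.1]
      have h2 : (0:ℝ) < 1 - y := by linarith [hy.2]
      have h3 : (0:ℝ) < 1 - y^2 := by nlinarith
      have : 2 + (6*y^2 * (3*(1-y^2)) - 2*y^3 * (3*(-2*y))) / (3*(1-y^2))^2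
          - (1/(1+y) + 1/(1-y)) = (4/3) * y^4 / (1-y^2)^2 := by
        field_simp
        ring
      rw [this]
      exact div_pos (by have := pow_pos hy.1 4; linarith) (pow_pos h3 2)
  have h0 : g 0 = 0 := by simp [hg]
  have := hmono (by simp : (0:ℝ) ∈ Ico (0:ℝ) 1) ⟨hx0.le, hx1⟩ hx0
  rw [h0] at this
  simp only [hg] at this
  linarith

noncomputable def cesaroD (k : ℕ) : ℝ :=
  (harmonic k : ℝ) - (1/2) * Real.log (k * (k+1)) - Real.eulerMascheroniConstant

noncomputable def cesaroB (k : ℕ) : ℝ := 1 / (6 * k * (k+1))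

lemma cesaroD_tendsto : Tendsto cesaroD atTop (nhds 0) := by
  have h1 := Real.tendsto_harmonic_sub_log
  have h2 := Real.tendsto_harmonic_sub_log_add_one
  have h3 : Tendsto (fun k : ℕ => (1/2) * (((harmonic k : ℝ) - Real.log k
      - Real.eulerMascheroniConstant) + ((harmonic k : ℝ) - Real.log (k+1)
      - Real.eulerMascheroniConstant))) atTop (nhds 0) := by
    have := ((h1.sub_const Real.eulerMascheroniConstant).add
      (h2.sub_const Real.eulerMascheroniConstant)).const_mul (1/2 : ℝ)
    simpa using this
  apply h3.congr'
  filter_upwards [eventually_ge_atTop 1] with k hk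
  have hk0 : (0:ℝ) < (k:ℝ) := by exact_mod_cast hk
  have : Real.log ((k:ℝ) * (k+1)) = Real.log k + Real.log (k+1) :=
    Real.log_mul hk0.ne' (by positivity)
  simp only [cesaroD, this]
  ring

lemma cesaroB_tendsto : Tendsto cesaroB atTop (nhds 0) := by
  apply squeeze_zero (fun k => ?A) (fun k => ?B) tendsto_one_div_atTop_nhds_zero_nat
  case A => unfold cesaroB; positivity
  case B =>
    unfold cesaroB
    rcases Nat.eq_zero_or_pos k with h | h
    · simp [h]
    · have hk : (1:ℝ) ≤ k := by exact_mod_cast h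
      rw [div_le_div_iff₀ (by positivity) (by positivity)]
      nlinarith

lemma cesaro_step (k : ℕ) (hk : 1 ≤ k) :
    0 < cesaroD k - cesaroD (k+1) ∧
      cesaroD k - cesaroD (k+1) < cesaroB k - cesaroB (k+1) := by
  have hk1 : (1:ℝ) ≤ (k:ℝ) := by exact_mod_cast hk
  set x : ℝ := 1 / ((k:ℝ) + 1) with hx
  have hx0 : 0 < x := by positivity
  have hx1 : x < 1 := by rw [hx, div_lt_one (by positivity)]; linarith
  have hA := cesaro_ineqA hx0 hx1
  have hB := cesaro_ineqB hx0 hx1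
  have e1 : (1:ℝ) + x = ((k:ℝ)+2) / ((k:ℝ)+1) := by rw [hx]; field_simp; ring
  have e2 : (1:ℝ) - x = (k:ℝ) / ((k:ℝ)+1) := by rw [hx]; field_simp; ring
  have hlog : Real.log (1+x) - Real.log (1-x)
      = Real.log ((k:ℝ)+2) - Real.log (k:ℝ) := by
    rw [e1, e2, Real.log_div (by positivity) (by positivity),
      Real.log_div (by positivity) (by positivity)]
    ring
  have hd : cesaroD k - cesaroD (k+1)
      = (1/2) * (Real.log (1+x) - Real.log (1-x)) - x := by
    simp only [cesaroD, hlog]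
    have hh : (harmonic (k+1) : ℝ) = (harmonic k : ℝ) + 1 / ((k:ℝ)+1) := by
      rw [harmonic_succ]; push_cast; ring
    have l1 : Real.log ((k:ℝ) * ((k:ℝ)+1))
        = Real.log (k:ℝ) + Real.log ((k:ℝ)+1) :=
      Real.log_mul (by positivity) (by positivity)
    have l2 : Real.log (((k:ℕ)+1 : ℕ) * (((k:ℕ)+1 : ℕ)+1) : ℝ)
        = Real.log ((k:ℝ)+1) + Real.log ((k:ℝ)+2) := by
      push_cast
      rw [Real.log_mul (by positivity) (by positivity)]
      ring_nf
    push_cast at hh l1 l2 ⊢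
    rw [hh, l1, l2, hx]
    ring
  constructor
  · rw [hd]; linarith
  · rw [hd]
    have hb : cesaroB k - cesaroB (k+1) = x^3 / (3 * (1 - x^2)) := by
      simp only [cesaroB]
      push_cast
      have h1 : (0:ℝ) < (k:ℝ) := by linarith
      rw [hx]
      have hk0 : (k:ℝ) ≠ 0 := h1.ne'
      have hk1' : (k:ℝ) + 1 ≠ 0 := by positivity
      have hk2' : (k:ℝ) + 2 ≠ 0 := by positivity
      have hx2 : (1:ℝ) - (1/((k:ℝ)+1))^2 = ((k:ℝ)*((k:ℝ)+2))/(((k:ℝ)+1)^2) := by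
        field_simp; ring
      rw [hx2]
      field_simp
      ring
    rw [hb]
    have h2 : x ^ 3 / (3 * (1 - x ^ 2)) = (2 * x ^ 3 / (3 * (1 - x ^ 2))) / 2 := by
      ring
    linarith

lemma cesaro_tail (N : ℕ) : ∀ k, N + 1 ≤ k →
    cesaroD k ≤ cesaroD (N+1) ∧ cesaroD (N+1) - cesaroB (N+1) ≤ cesaroD k - cesaroB k := by
  intro k hk
  induction k, hk using Nat.le_induction with
  | base => exact ⟨le_refl _, le_refl _⟩
  | succ k hk ih =>
    have hs := cesaro_step k (by omega)
    exact ⟨by linarith [ih.1, hs.1], by linarith [ih.2, hs.2]⟩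

/-- Cesàro's theorem: there is `cₙ ∈ (0,1)` with `Hₙ = (1/2)ln(2m) + γ + cₙ/(12m)`;
equivalently `0 < Hₙ − (1/2)ln(2m) − γ < 1/(12m)`. -/
theorem cesaro_harmonic (n : ℕ) (hn : 1 ≤ n) (m : ℝ) (hm : m = n * (n + 1) / 2) :
    (∃ c : ℝ, 0 < c ∧ c < 1 ∧
      (harmonic n : ℝ) = (1 / 2) * Real.log (2 * m) + Real.eulerMascheroniConstant
        + c / (12 * m)) ∧
    (0 < (harmonic n : ℝ) - (1 / 2) * Real.log (2 * m) - Real.eulerMascheroniConstant ∧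
      (harmonic n : ℝ) - (1 / 2) * Real.log (2 * m) - Real.eulerMascheroniConstant
        < 1 / (12 * m)) := by
  have h2m : 2 * m = (n:ℝ) * ((n:ℝ) + 1) := by rw [hm]; ring
  have hn1 : (1:ℝ) ≤ (n:ℝ) := by exact_mod_cast hn
  have hEd : (harmonic n : ℝ) - (1 / 2) * Real.log (2 * m)
      - Real.eulerMascheroniConstant = cesaroD n := by
    rw [h2m]; rfl
  have h12m : 12 * m = 6 * (n:ℝ) * ((n:ℝ) + 1) := by rw [hm]; ring
  have h12pos : 0 < 12 * m := by rw [h12m]; positivity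
  have hbn : 1 / (12 * m) = cesaroB n := by rw [h12m]; rfl
  -- d (n+1) ≥ 0
  have hd1 : 0 ≤ cesaroD (n+1) := by
    refine le_of_tendsto cesaroD_tendsto ?_
    filter_upwards [eventually_ge_atTop (n+1)] with k hk
    exact (cesaro_tail n k hk).1
  -- d (n+1) - b (n+1) ≤ 0
  have hd2 : cesaroD (n+1) - cesaroB (n+1) ≤ 0 := by
    have ht : Filter.Tendsto (fun k => cesaroD k - cesaroB k) Filter.atTop (nhds 0) := by
      simpa using cesaroD_tendsto.sub cesaroB_tendsto
    refine ge_of_tendsto ht ?_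
    filter_upwards [eventually_ge_atTop (n+1)] with k hk
    exact (cesaro_tail n k hk).2
  have hs := cesaro_step n hn
  have hpos : 0 < cesaroD n := by linarith [hs.1]
  have hlt : cesaroD n < cesaroB n := by linarith [hs.2]
  refine ⟨⟨cesaroD n * (12 * m), by positivity, ?_, ?_⟩, ?_, ?_⟩
  · have h : cesaroD n < 1 / (12 * m) := by rw [hbn]; exact hlt
    exact (lt_div_iff₀ h12pos).mp h
  · have hc : cesaroD n * (12 * m) / (12 * m) = cesaroD n :=
      mul_div_cancel_right₀ _ h12pos.ne'
    rw [hc]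
    have := hEd
    linarith
  · rw [hEd]; exact hpos
  · rw [hEd, hbn]; exact hlt
end

section
/- For every integer n ≥ 2, with ε_n = H_n − (1/2)·ln(n(n+1)) − γ, one has ε_{n−1} − ε_n = ∫₀¹ t²/(n(n² − t²)) dt. -/
open Real

/-- Bromwich's hint: `ε_{n−1} − εₙ = ∫₀¹ t²/(n(n² − t²)) dt`. -/
theorem epsilon_diff_integral (n : ℕ) (hn : 2 ≤ n)
    (ε : ℕ → ℝ) (hε : ∀ k : ℕ, ε k = (harmonic k : ℝ)
      - (1 / 2) * Real.log (k * (k + 1)) - Real.eulerMascheroniConstant) :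
    ε (n - 1) - ε n = ∫ t in (0:ℝ)..1, t ^ 2 / (n * ((n : ℝ) ^ 2 - t ^ 2)) := by
  obtain ⟨m, rfl⟩ : ∃ m, n = m + 2 := ⟨n - 2, by omega⟩
  have hm0 : (0:ℝ) ≤ (m:ℝ) := Nat.cast_nonneg m
  set N : ℝ := (m:ℝ) + 2 with hNdef
  clear_value N
  have hN2 : (2:ℝ) ≤ N := by linarith
  set F : ℝ → ℝ := fun t => -t/N + (1/2) * (Real.log (N + t) - Real.log (N - t)) with hF
  have hderiv : ∀ t ∈ Set.uIcc (0:ℝ) 1,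
      HasDerivAt F (t ^ 2 / (N * (N ^ 2 - t ^ 2))) t := by
    intro t ht
    rw [Set.uIcc_of_le (by norm_num)] at ht
    obtain ⟨ht0, ht1⟩ := ht
    have hNt1 : (0:ℝ) < N + t := by linarith
    have hNt2 : (0:ℝ) < N - t := by linarith
    have hN0 : (0:ℝ) < N := by linarith
    have h1 : HasDerivAt (fun t : ℝ => Real.log (N + t)) (1 / (N + t)) t := by
      simpa using (((hasDerivAt_id t).const_add N).log hNt1.ne')
    have h2 : HasDerivAt (fun t : ℝ => Real.log (N - t)) ((-1) / (N - t)) t := by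
      simpa using (((hasDerivAt_id t).const_sub N).log hNt2.ne')
    have h3 : HasDerivAt (fun t : ℝ => -t/N) (-1/N) t := by
      simpa using ((hasDerivAt_id t).neg.div_const N)
    have hkey : -1/N + (1/2) * (1 / (N + t) - (-1) / (N - t))
        = t ^ 2 / (N * (N ^ 2 - t ^ 2)) := by
      have h4 : N ^ 2 - t ^ 2 ≠ 0 := by nlinarith
      field_simp
      ring
    have := h3.add (((h1.sub h2).const_mul (1/2 : ℝ)))
    rw [hkey] at this
    exact this
  have hint : IntervalIntegrable (fun t : ℝ => t ^ 2 / (N * (N ^ 2 - t ^ 2)))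
      MeasureTheory.volume 0 1 := by
    apply ContinuousOn.intervalIntegrable
    apply ContinuousOn.div (by fun_prop) (by fun_prop)
    intro t ht
    rw [Set.uIcc_of_le (by norm_num)] at ht
    obtain ⟨ht0, ht1⟩ := ht
    have h5 : (0:ℝ) < N ^ 2 - t ^ 2 := by nlinarith
    have h6 : (0:ℝ) < N := by linarith
    positivity
  have hFTC := intervalIntegral.integral_eq_sub_of_hasDerivAt hderiv hint
  have hInt : (∫ t in (0:ℝ)..1, t ^ 2 / ((m + 2 : ℕ) * (((m + 2 : ℕ) : ℝ) ^ 2 - t ^ 2)))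
      = F 1 - F 0 := by
    push_cast
    rw [← hNdef]
    exact hFTC
  rw [show m + 2 - 1 = m + 1 from rfl, hε, hε, hInt]
  have hF1 : F 1 = -1/N + (1/2) * (Real.log (N + 1) - Real.log (N - 1)) := by simp [hF]
  have hF0 : F 0 = 0 := by simp [hF]
  have hh : (harmonic (m + 2) : ℝ) = (harmonic (m + 1) : ℝ) + 1 / ((m:ℝ) + 2) := by
    rw [show m + 2 = (m + 1) + 1 from rfl, harmonic_succ]
    push_cast
    ring
  have hm1 : (0:ℝ) < (m:ℝ) + 1 := by linarith
  have hm2 : (0:ℝ) < (m:ℝ) + 2 := by linarith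
  have hm3 : (0:ℝ) < (m:ℝ) + 3 := by linarith
  have hlog1 : Real.log (((m + 1 : ℕ) : ℝ) * (((m + 1 : ℕ) : ℝ) + 1)) =
      Real.log ((m:ℝ) + 1) + Real.log ((m:ℝ) + 2) := by
    push_cast
    rw [Real.log_mul hm1.ne' (by linarith)]
    congr 1
    ring
  have hlog2 : Real.log (((m + 2 : ℕ) : ℝ) * (((m + 2 : ℕ) : ℝ) + 1)) =
      Real.log ((m:ℝ) + 2) + Real.log ((m:ℝ) + 3) := by
    push_cast
    rw [Real.log_mul hm2.ne' (by linarith)]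
    congr 1
    ring
  rw [hF1, hF0, hh, hlog1, hlog2, hNdef,
    show (m:ℝ) + 2 + 1 = (m:ℝ) + 3 from by ring,
    show (m:ℝ) + 2 - 1 = (m:ℝ) + 1 from by ring]
  ring
end

section
/- For every positive integer n, with ε_n = H_n − (1/2)·ln(n(n+1)) − γ, the series ∑_{k=n+1}^∞ ∫₀¹ t²/(k(k² − t²)) dt converges and equals ε_n. -/
open Real Filter Topology

/-- Evaluation of the integral `∫₀¹ t²/(k(k²−t²)) dt` for real `k ≥ 2`. -/
lemma integral_aux (k : ℝ) (hk : 2 ≤ k) :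
    (∫ t in (0:ℝ)..1, t ^ 2 / (k * (k ^ 2 - t ^ 2)))
      = (1 / 2) * (Real.log (k + 1) - Real.log (k - 1)) - 1 / k := by
  have hk0 : (0:ℝ) < k := by linarith
  have key : ∀ t ∈ Set.uIcc (0:ℝ) 1,
      HasDerivAt (fun t : ℝ => (1 / 2) * (Real.log (k + t) - Real.log (k - t)) - t / k)
        (t ^ 2 / (k * (k ^ 2 - t ^ 2))) t := by
    intro t ht
    rw [Set.uIcc_of_le (by norm_num : (0:ℝ) ≤ 1)] at ht
    obtain ⟨ht0, ht1⟩ := ht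
    have h1 : (0:ℝ) < k + t := by linarith
    have h2 : (0:ℝ) < k - t := by linarith
    have d1 : HasDerivAt (fun t : ℝ => Real.log (k + t)) (1 / (k + t)) t := by
      have := ((hasDerivAt_id t).const_add k).log h1.ne'
      simpa using this
    have d2 : HasDerivAt (fun t : ℝ => Real.log (k - t)) (-1 / (k - t)) t := by
      have := ((hasDerivAt_id t).const_sub k).log h2.ne'
      simpa using this
    have d3 : HasDerivAt (fun t : ℝ => t / k) (1 / k) t := by
      simpa using (hasDerivAt_id t).div_const k
    have := (((d1.sub d2).const_mul (1/2 : ℝ)).sub d3)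
    refine this.congr_deriv ?_
    have hne1 : k + t ≠ 0 := h1.ne'
    have hne2 : k - t ≠ 0 := h2.ne'
    have hne3 : k ≠ 0 := hk0.ne'
    have hne4 : k ^ 2 - t ^ 2 ≠ 0 := by nlinarith
    field_simp
    ring
  have hint : IntervalIntegrable (fun t : ℝ => t ^ 2 / (k * (k ^ 2 - t ^ 2)))
      MeasureTheory.volume 0 1 := by
    apply ContinuousOn.intervalIntegrable
    apply ContinuousOn.div (by fun_prop) (by fun_prop)
    intro t ht
    rw [Set.uIcc_of_le (by norm_num : (0:ℝ) ≤ 1)] at ht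
    obtain ⟨ht0, ht1⟩ := ht
    have hpos : (0:ℝ) < k ^ 2 - t ^ 2 := by nlinarith
    exact (mul_pos hk0 hpos).ne'
  have := intervalIntegral.integral_eq_sub_of_hasDerivAt key hint
  rw [this]
  simp

/-- `εₙ` as a convergent series of integrals:
`εₙ = ∑_{k=n+1}^∞ ∫₀¹ t²/(k(k² − t²)) dt`. -/
theorem epsilon_eq_tsum_integral (n : ℕ) (hn : 0 < n)
    (ε : ℝ) (hε : ε = (harmonic n : ℝ) - (1 / 2) * Real.log (n * (n + 1))
      - Real.eulerMascheroniConstant) :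
    Summable (fun j : ℕ =>
        ∫ t in (0:ℝ)..1, t ^ 2 / ((n + 1 + j) * (((n : ℝ) + 1 + j) ^ 2 - t ^ 2))) ∧
    (∑' j : ℕ,
        ∫ t in (0:ℝ)..1, t ^ 2 / ((n + 1 + j) * (((n : ℝ) + 1 + j) ^ 2 - t ^ 2))) = ε := by
  set f : ℕ → ℝ := fun j =>
    ∫ t in (0:ℝ)..1, t ^ 2 / ((n + 1 + j) * (((n : ℝ) + 1 + j) ^ 2 - t ^ 2)) with hf
  have hn1 : (1:ℝ) ≤ (n:ℝ) := by exact_mod_cast hn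
  -- nonnegativity
  have hnonneg : ∀ j, 0 ≤ f j := by
    intro j
    apply intervalIntegral.integral_nonneg (by norm_num)
    intro t ht
    obtain ⟨ht0, ht1⟩ := ht
    have hj : (0:ℝ) ≤ (j:ℝ) := Nat.cast_nonneg j
    apply div_nonneg (by positivity)
    have hc : (2:ℝ) ≤ (n:ℝ) + 1 + j := by linarith
    have hpos : (0:ℝ) < ((n:ℝ) + 1 + j) ^ 2 - t ^ 2 := by nlinarith
    exact (mul_pos (by linarith) hpos).le
  -- auxiliary sequence g
  set g : ℕ → ℝ := fun m => (1 / 2) * (Real.log m + Real.log (m + 1)) - (harmonic m : ℝ)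
    with hg
  -- closed form for f
  have hfeq : ∀ j : ℕ, f j = g (n + 1 + j) - g (n + j) := by
    intro j
    have hk : (2:ℝ) ≤ (n:ℝ) + 1 + j := by
      have : (0:ℝ) ≤ (j:ℝ) := Nat.cast_nonneg j
      linarith
    have := integral_aux ((n:ℝ) + 1 + j) hk
    rw [hf]
    simp only
    rw [this, hg]
    have hcast1 : ((n + 1 + j : ℕ) : ℝ) = (n:ℝ) + 1 + j := by push_cast; ring
    have hcast2 : ((n + j : ℕ) : ℝ) = (n:ℝ) + j := by push_cast; ring
    have hharm : (harmonic (n + 1 + j) : ℝ) = (harmonic (n + j) : ℝ) + 1 / ((n:ℝ) + 1 + j) := by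
      have : n + 1 + j = (n + j) + 1 := by ring
      rw [this, harmonic_succ]
      push_cast
      ring
    simp only [hcast1, hcast2, hharm]
    have e1 : (n:ℝ) + 1 + j + 1 = (n:ℝ) + 1 + j + 1 := rfl
    have e2 : (n:ℝ) + 1 + j - 1 = (n:ℝ) + j := by ring
    have e3 : (n:ℝ) + j + 1 = (n:ℝ) + 1 + j := by ring
    rw [e2, e3]
    ring
  -- partial sums telescope
  have hsum : ∀ M : ℕ, ∑ j ∈ Finset.range M, f j = g (n + M) - g n := by
    intro M
    have : ∀ j, f j = (fun i => g (n + i)) (j + 1) - (fun i => g (n + i)) j := by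
      intro j
      rw [hfeq j]
      congr 2 <;> omega
    rw [Finset.sum_congr rfl fun j _ => this j, Finset.sum_range_sub (fun i => g (n + i)) M]
    simp
  -- limit of g
  have hglim : Tendsto g atTop (𝓝 (-Real.eulerMascheroniConstant)) := by
    have h1 := Real.tendsto_harmonic_sub_log
    have h2 := Real.tendsto_harmonic_sub_log_add_one
    have h3 : Tendsto (fun m : ℕ => Real.log (m + 1) - Real.log m) atTop (𝓝 0) := by
      have := h1.sub h2
      rw [sub_self] at this
      exact this.congr fun m => by ring
    have : Tendsto (fun m : ℕ =>
        (1 / 2) * (Real.log (m + 1) - Real.log m) - ((harmonic m : ℝ) - Real.log m))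
        atTop (𝓝 ((1 / 2) * 0 - Real.eulerMascheroniConstant)) :=
      (h3.const_mul (1/2)).sub h1
    rw [show (1/2 : ℝ) * 0 - Real.eulerMascheroniConstant = -Real.eulerMascheroniConstant
      by ring] at this
    exact this.congr fun m => by rw [hg]; ring
  -- partial sums tend to ε
  have hlim : Tendsto (fun M => ∑ j ∈ Finset.range M, f j) atTop (𝓝 ε) := by
    have hcomp : Tendsto (fun M : ℕ => g (n + M)) atTop
        (𝓝 (-Real.eulerMascheroniConstant)) := by
      have := hglim.comp (tendsto_add_atTop_nat n)
      exact this.congr fun M => by simp [Function.comp, Nat.add_comm]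
    have := hcomp.sub_const (g n)
    have hε' : -Real.eulerMascheroniConstant - g n = ε := by
      rw [hε, hg]
      have hn0 : ((n:ℝ)) ≠ 0 := by positivity
      have hn1' : ((n:ℝ) + 1) ≠ 0 := by positivity
      rw [Real.log_mul hn0 hn1']
      ring
    rw [hε'] at this
    exact this.congr fun M => (hsum M).symm
  have hS : HasSum f ε := (hasSum_iff_tendsto_nat_of_nonneg hnonneg ε).mpr hlim
  exact ⟨hS.summable, hS.tsum_eq⟩
end

section
/- For every positive integer n, with m = n(n+1)/2 and ε_n = H_n − (1/2)·ln(n(n+1)) − γ, one has ε_n = 1/(12m) − 1/(120m²) + (8/15)·∑_{k=n+1}^∞ ∫₀¹ t⁶/(k(k² − t²)³) dt, the series on the right being convergent. -/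
open Real Filter

private lemma epsilon_deriv_F (k : ℝ) (hk : 2 ≤ k) (t : ℝ) (ht : t ∈ Set.Icc (0:ℝ) 1) :
    HasDerivAt (fun t : ℝ => (1/k) * (-t + (15*k/16) * (Real.log (k+t) - Real.log (k-t))
        - (9*k^2/8) * (t/(k^2 - t^2)) + (k^4/4) * (t/(k^2-t^2)^2)))
      (t^6 / (k * (k^2 - t^2)^3)) t := by
  obtain ⟨ht0, ht1⟩ := ht
  have hkt : 0 < k - t := by linarith
  have hkt' : 0 < k + t := by linarith
  have hd : 0 < k^2 - t^2 := by nlinarith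
  have h1 : HasDerivAt (fun t : ℝ => Real.log (k+t)) (1/(k+t)) t := by
    have := ((hasDerivAt_id t).const_add k).log hkt'.ne'
    simpa using this
  have h2 : HasDerivAt (fun t : ℝ => Real.log (k-t)) (-(1/(k-t))) t := by
    have := ((hasDerivAt_id t).const_sub k).log hkt.ne'
    simpa [neg_div] using this
  have hq : HasDerivAt (fun t : ℝ => k^2 - t^2) (-(2*t)) t := by
    simpa using ((hasDerivAt_pow 2 t).const_sub (k^2))
  have h3 : HasDerivAt (fun t : ℝ => t/(k^2 - t^2))
      ((k^2 + t^2)/(k^2-t^2)^2) t := by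
    have := (hasDerivAt_id' t).fun_div hq hd.ne'
    refine this.congr_deriv ?_
    field_simp
    ring
  have h4 : HasDerivAt (fun t : ℝ => t/(k^2 - t^2)^2)
      ((k^2 + 3*t^2)/(k^2-t^2)^3) t := by
    have hq2 : HasDerivAt (fun t : ℝ => (k^2 - t^2)^2) (2*(k^2-t^2)*(-(2*t))) t := by
      simpa using (hq.fun_pow 2)
    have := (hasDerivAt_id' t).fun_div hq2 (pow_ne_zero 2 hd.ne')
    refine this.congr_deriv ?_
    field_simp
    ring
  have := ((((hasDerivAt_id t).neg.add (((h1.sub h2).const_mul (15*k/16)))).sub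
      (h3.const_mul (9*k^2/8))).add (h4.const_mul (k^4/4))).const_mul (1/k)
  refine this.congr_deriv ?_
  have hk0 : k ≠ 0 := by linarith
  field_simp
  ring

private lemma epsilon_denom_ne (k : ℝ) (hk : 2 ≤ k) {t : ℝ} (ht : t ∈ Set.uIcc (0:ℝ) 1) :
    k * (k^2 - t^2)^3 ≠ 0 := by
  rw [Set.uIcc_of_le (by norm_num)] at ht
  obtain ⟨h0, h1⟩ := ht
  have : 0 < k^2 - t^2 := by nlinarith
  positivity

private lemma epsilon_integral_eval (k : ℝ) (hk : 2 ≤ k) :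
    ∫ t in (0:ℝ)..1, t^6 / (k * (k^2 - t^2)^3)
      = (15/8) * (((1/2) * (Real.log (k+1) - Real.log (k-1)) - 1/k)
          - (1/3) * (1/(k*(k^2-1))) + (2/15) * (1/(k*(k^2-1)^2))) := by
  have hk0 : (0:ℝ) < k := by linarith
  have hcont : ContinuousOn (fun t : ℝ => t^6 / (k * (k^2 - t^2)^3)) (Set.uIcc 0 1) := by
    apply ContinuousOn.div (by fun_prop) (by fun_prop) (fun t ht => epsilon_denom_ne k hk ht)
  have key := intervalIntegral.integral_eq_sub_of_hasDerivAt
    (f := fun t : ℝ => (1/k) * (-t + (15*k/16) * (Real.log (k+t) - Real.log (k-t))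
        - (9*k^2/8) * (t/(k^2 - t^2)) + (k^4/4) * (t/(k^2-t^2)^2)))
    (fun t ht => epsilon_deriv_F k hk t (by rwa [Set.uIcc_of_le (by norm_num)] at ht))
    (hcont.intervalIntegrable)
  rw [key]
  have h1 : (0:ℝ) < k - 1 := by linarith
  have h2 : (0:ℝ) < k + 1 := by linarith
  have h3 : (0:ℝ) < k^2 - 1 := by nlinarith
  norm_num
  field_simp
  ring

private lemma epsilon_hasSum_teles (f g : ℕ → ℝ) (hfg : ∀ j, g j = f j - f (j+1))
    (hg0 : ∀ j, 0 ≤ g j) (hf : Filter.Tendsto f Filter.atTop (nhds 0)) :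
    HasSum g (f 0) := by
  rw [hasSum_iff_tendsto_nat_of_nonneg hg0]
  have hps : ∀ J, ∑ j ∈ Finset.range J, g j = f 0 - f J := by
    intro J
    simp only [hfg]
    exact Finset.sum_range_sub' f J
  have := (tendsto_const_nhds (x := f 0) (f := Filter.atTop (α := ℕ))).sub hf
  rw [sub_zero] at this
  exact this.congr (fun J => (hps J).symm)

private lemma epsilon_hasSum_b (n : ℕ) (hn : 0 < n) :
    HasSum (fun j : ℕ => 1/(((n:ℝ)+1+j) * (((n:ℝ)+1+j)^2 - 1)))
      (1/(2*(n:ℝ)*((n:ℝ)+1))) := by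
  have hn1 : (1:ℝ) ≤ (n:ℝ) := by exact_mod_cast hn
  have key := epsilon_hasSum_teles (fun j : ℕ => 1/(2*((n:ℝ)+j)*((n:ℝ)+j+1)))
    (fun j : ℕ => 1/(((n:ℝ)+1+j) * (((n:ℝ)+1+j)^2 - 1)))
    (fun j => by
      have h0 : (0:ℝ) ≤ (j:ℝ) := Nat.cast_nonneg j
      have h1 : (0:ℝ) < (n:ℝ)+j := by linarith
      have h2 : (0:ℝ) < (n:ℝ)+j+1 := by linarith
      have h3 : (0:ℝ) < (n:ℝ)+j+2 := by linarith
      push_cast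
      rw [show ((n:ℝ) + 1 + j)^2 - 1 = ((n:ℝ)+j)*((n:ℝ)+j+2) by ring]
      rw [show (n:ℝ) + 1 + j = (n:ℝ)+j+1 by ring]
      field_simp
      ring)
    (fun j => by
      have h0 : (0:ℝ) ≤ (j:ℝ) := Nat.cast_nonneg j
      have h1 : (0:ℝ) < (n:ℝ)+1+j := by linarith
      have h2 : (0:ℝ) < ((n:ℝ)+1+j)^2 - 1 := by nlinarith
      positivity)
    (by
      have hmono : ∀ J : ℕ, (J:ℝ) ≤ 2*((n:ℝ)+J)*((n:ℝ)+J+1) := by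
        intro J
        have h0 : (0:ℝ) ≤ (J:ℝ) := Nat.cast_nonneg J
        nlinarith
      have h := (tendsto_atTop_mono hmono tendsto_natCast_atTop_atTop).inv_tendsto_atTop
      exact h.congr (fun J => (one_div _).symm))
  simpa using key

private lemma epsilon_hasSum_c (n : ℕ) (hn : 0 < n) :
    HasSum (fun j : ℕ => 1/(((n:ℝ)+1+j) * (((n:ℝ)+1+j)^2 - 1)^2))
      (1/(4*(n:ℝ)^2*((n:ℝ)+1)^2)) := by
  have hn1 : (1:ℝ) ≤ (n:ℝ) := by exact_mod_cast hn
  have key := epsilon_hasSum_teles (fun j : ℕ => 1/(4*((n:ℝ)+j)^2*((n:ℝ)+j+1)^2))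
    (fun j : ℕ => 1/(((n:ℝ)+1+j) * (((n:ℝ)+1+j)^2 - 1)^2))
    (fun j => by
      have h0 : (0:ℝ) ≤ (j:ℝ) := Nat.cast_nonneg j
      have h1 : (0:ℝ) < (n:ℝ)+j := by linarith
      have h2 : (0:ℝ) < (n:ℝ)+j+1 := by linarith
      have h3 : (0:ℝ) < (n:ℝ)+j+2 := by linarith
      push_cast
      rw [show ((n:ℝ) + 1 + j)^2 - 1 = ((n:ℝ)+j)*((n:ℝ)+j+2) by ring]
      rw [show (n:ℝ) + 1 + j = (n:ℝ)+j+1 by ring]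
      field_simp
      ring)
    (fun j => by
      have h0 : (0:ℝ) ≤ (j:ℝ) := Nat.cast_nonneg j
      have h1 : (0:ℝ) < (n:ℝ)+1+j := by linarith
      have h2 : (0:ℝ) < ((n:ℝ)+1+j)^2 - 1 := by nlinarith
      positivity)
    (by
      have hmono : ∀ J : ℕ, (J:ℝ) ≤ 4*((n:ℝ)+J)^2*((n:ℝ)+J+1)^2 := by
        intro J
        have h0 : (0:ℝ) ≤ (J:ℝ) := Nat.cast_nonneg J
        nlinarith
      have h := (tendsto_atTop_mono hmono tendsto_natCast_atTop_atTop).inv_tendsto_atTop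
      exact h.congr (fun J => (one_div _).symm))
  simpa using key

/-- The tail sequence `εₙ` as a function of `n`. -/
private noncomputable def epsE (N : ℕ) : ℝ :=
  (harmonic N : ℝ) - (1/2) * (Real.log N + Real.log ((N:ℝ)+1))
    - Real.eulerMascheroniConstant

private lemma epsilon_tendsto_E : Filter.Tendsto epsE Filter.atTop (nhds 0) := by
  have h1 : Filter.Tendsto (fun N : ℕ => (harmonic N : ℝ) - Real.log N
      - Real.eulerMascheroniConstant) Filter.atTop (nhds 0) := by
    have := Real.tendsto_harmonic_sub_log.sub
      (tendsto_const_nhds (x := Real.eulerMascheroniConstant))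
    simpa using this
  have h2 : Filter.Tendsto (fun N : ℕ => Real.log ((N:ℝ)+1) - Real.log N)
      Filter.atTop (nhds 0) := by
    have hbase : Filter.Tendsto (fun N : ℕ => (1:ℝ) + 1/(N:ℝ)) Filter.atTop (nhds 1) := by
      simpa using (tendsto_const_nhds (x := (1:ℝ))).add tendsto_one_div_atTop_nhds_zero_nat
    have hlog := (Real.continuousAt_log one_ne_zero).tendsto.comp hbase
    rw [Real.log_one] at hlog
    apply hlog.congr'
    filter_upwards [Filter.eventually_gt_atTop 0] with N hN
    have hN' : (0:ℝ) < (N:ℝ) := by exact_mod_cast hN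
    simp only [Function.comp]
    rw [show (1:ℝ) + 1/(N:ℝ) = ((N:ℝ)+1)/(N:ℝ) by field_simp]
    rw [Real.log_div (by positivity) hN'.ne']
  have h := h1.sub (h2.const_mul (1/2))
  rw [mul_zero, sub_zero] at h
  apply h.congr
  intro N
  simp only [epsE]
  ring

private lemma epsilon_sum_g (n : ℕ) (hn : 0 < n) (J : ℕ) :
    ∑ j ∈ Finset.range J,
        ((1/2) * (Real.log (((n:ℝ)+1+j) + 1) - Real.log (((n:ℝ)+1+j) - 1)) - 1/((n:ℝ)+1+j))
      = epsE n - epsE (n + J) := by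
  induction J with
  | zero => simp
  | succ J ih =>
    rw [Finset.sum_range_succ, ih]
    have hharm : (harmonic (n + J + 1) : ℝ) = (harmonic (n + J) : ℝ) + 1/((n:ℝ)+J+1) := by
      rw [harmonic_succ]
      push_cast
      ring
    have hstep : (1/2) * (Real.log (((n:ℝ)+1+J) + 1) - Real.log (((n:ℝ)+1+J) - 1))
        - 1/((n:ℝ)+1+J) = epsE (n + J) - epsE (n + J + 1) := by
      simp only [epsE]
      rw [hharm]
      push_cast
      rw [show ((n:ℝ)+1+J) + 1 = ((n:ℝ)+J+1)+1 by ring,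
        show ((n:ℝ)+1+J) - 1 = (n:ℝ)+J by ring,
        show (n:ℝ)+1+J = (n:ℝ)+J+1 by ring]
      ring
    rw [hstep]
    rw [show n + (J+1) = n + J + 1 by omega]
    ring

private lemma epsilon_hasSum_g (n : ℕ) (hn : 0 < n)
    (h0 : ∀ j : ℕ, 0 ≤ (1/2) * (Real.log (((n:ℝ)+1+j) + 1) - Real.log (((n:ℝ)+1+j) - 1))
      - 1/((n:ℝ)+1+j)) :
    HasSum (fun j : ℕ => (1/2) * (Real.log (((n:ℝ)+1+j) + 1) - Real.log (((n:ℝ)+1+j) - 1))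
      - 1/((n:ℝ)+1+j)) (epsE n) := by
  rw [hasSum_iff_tendsto_nat_of_nonneg h0]
  have hcomp : Filter.Tendsto (fun J : ℕ => epsE (n + J)) Filter.atTop (nhds 0) :=
    epsilon_tendsto_E.comp (tendsto_atTop_atTop_of_monotone (fun a b hab => by omega)
      (fun x => ⟨x, by omega⟩))
  have h := (tendsto_const_nhds (x := epsE n) (f := Filter.atTop (α := ℕ))).sub hcomp
  rw [sub_zero] at h
  exact h.congr (fun J => (epsilon_sum_g n hn J).symm)

/-- Two-term expansion with integral remainder:
`εₙ = 1/(12m) − 1/(120m²) + (8/15)·∑_{k=n+1}^∞ ∫₀¹ t⁶/(k(k²−t²)³) dt`. -/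
theorem epsilon_two_terms (n : ℕ) (hn : 0 < n) (m : ℝ) (hm : m = n * (n + 1) / 2)
    (ε : ℝ) (hε : ε = (harmonic n : ℝ) - (1 / 2) * Real.log (n * (n + 1))
      - Real.eulerMascheroniConstant) :
    Summable (fun j : ℕ =>
        ∫ t in (0:ℝ)..1, t ^ 6 / ((n + 1 + j) * (((n : ℝ) + 1 + j) ^ 2 - t ^ 2) ^ 3)) ∧
    ε = 1 / (12 * m) - 1 / (120 * m ^ 2)
        + (8 / 15) * ∑' j : ℕ,
            ∫ t in (0:ℝ)..1, t ^ 6 / ((n + 1 + j) * (((n : ℝ) + 1 + j) ^ 2 - t ^ 2) ^ 3) := by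
  have hn1 : (1:ℝ) ≤ (n:ℝ) := by exact_mod_cast hn
  have hK2 : ∀ j : ℕ, (2:ℝ) ≤ (n:ℝ)+1+j := by
    intro j
    have : (0:ℝ) ≤ (j:ℝ) := Nat.cast_nonneg j
    linarith
  have hKpos : ∀ j : ℕ, (0:ℝ) < (n:ℝ)+1+j := fun j => lt_of_lt_of_le two_pos (hK2 j)
  have hDpos : ∀ j : ℕ, (0:ℝ) < ((n:ℝ)+1+j)^2 - 1 := by
    intro j; have := hK2 j; nlinarith
  -- integral evaluation
  have hIval : ∀ j : ℕ,
      (∫ t in (0:ℝ)..1, t ^ 6 / ((n + 1 + j) * (((n : ℝ) + 1 + j) ^ 2 - t ^ 2) ^ 3))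
        = (15/8) * (((1/2) * (Real.log (((n:ℝ)+1+j) + 1) - Real.log (((n:ℝ)+1+j) - 1))
            - 1/((n:ℝ)+1+j))
          - (1/3) * (1/(((n:ℝ)+1+j) * (((n:ℝ)+1+j)^2 - 1)))
          + (2/15) * (1/(((n:ℝ)+1+j) * (((n:ℝ)+1+j)^2 - 1)^2))) := by
    intro j
    exact epsilon_integral_eval ((n:ℝ)+1+j) (hK2 j)
  -- nonnegativity of the integrals
  have hI0 : ∀ j : ℕ,
      0 ≤ ∫ t in (0:ℝ)..1, t ^ 6 / ((n + 1 + j) * (((n : ℝ) + 1 + j) ^ 2 - t ^ 2) ^ 3) := by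
    intro j
    apply intervalIntegral.integral_nonneg (by norm_num)
    intro t ht
    obtain ⟨ht0, ht1⟩ := ht
    have hk := hK2 j
    have hd : (0:ℝ) < ((n:ℝ) + 1 + j)^2 - t^2 := by nlinarith
    have h6 : (0:ℝ) ≤ t^6 := by positivity
    exact div_nonneg h6 (mul_nonneg (by linarith) (pow_nonneg hd.le 3))
  -- nonnegativity of g
  have hg0 : ∀ j : ℕ, 0 ≤ (1/2) * (Real.log (((n:ℝ)+1+j) + 1) - Real.log (((n:ℝ)+1+j) - 1))
      - 1/((n:ℝ)+1+j) := by
    intro j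
    have h1 := hIval j
    have h2 := hI0 j
    have hD := hDpos j
    have hKp := hKpos j
    have hD3 : (3:ℝ) ≤ ((n:ℝ)+1+j)^2 - 1 := by have := hK2 j; nlinarith
    have hcb : (2/15) * (1/(((n:ℝ)+1+j) * (((n:ℝ)+1+j)^2 - 1)^2))
        ≤ (1/3) * (1/(((n:ℝ)+1+j) * (((n:ℝ)+1+j)^2 - 1))) := by
      rw [mul_one_div, mul_one_div, div_le_div_iff₀ (by positivity) (by positivity)]
      nlinarith [mul_pos hKp hD]
    linarith
  -- combine the three series
  have hbsum := epsilon_hasSum_b n hn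
  have hcsum := epsilon_hasSum_c n hn
  have hgsum := epsilon_hasSum_g n hn hg0
  have hIsum : HasSum (fun j : ℕ =>
      ∫ t in (0:ℝ)..1, t ^ 6 / ((n + 1 + j) * (((n : ℝ) + 1 + j) ^ 2 - t ^ 2) ^ 3))
      ((15/8) * (epsE n - (1/3) * (1/(2*(n:ℝ)*((n:ℝ)+1)))
        + (2/15) * (1/(4*(n:ℝ)^2*((n:ℝ)+1)^2)))) := by
    rw [show (fun j : ℕ =>
        ∫ t in (0:ℝ)..1, t ^ 6 / ((n + 1 + j) * (((n : ℝ) + 1 + j) ^ 2 - t ^ 2) ^ 3)) = _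
      from funext hIval]
    exact ((hgsum.sub (hbsum.mul_left (1/3))).add (hcsum.mul_left (2/15))).mul_left (15/8)
  have hεE : ε = epsE n := by
    rw [hε]
    simp only [epsE]
    rw [Real.log_mul (by positivity : ((n:ℝ)) ≠ 0) (by positivity : ((n:ℝ)+1) ≠ 0)]
  constructor
  · exact hIsum.summable
  · rw [hIsum.tsum_eq, hm, ← hεE]
    have hnpos : (0:ℝ) < (n:ℝ) := by exact_mod_cast hn
    have hnpos1 : (0:ℝ) < (n:ℝ) + 1 := by linarith
    field_simp
    ring
end

section
/- For every positive integer n, with m = n(n+1)/2, one has the Kummer-transformation identity (8/105)·∑_{k=n+1}^∞ 1/(k(k² − 1)³) = 1/(630m³) − (8/315)·∑_{k=n+1}^∞ 1/(k³(k² − 1)³), both series being convergent. -/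
open Real

/-- Kummer-transformation identity:
`(8/105)·∑_{k=n+1}^∞ 1/(k(k²−1)³) = 1/(630m³) − (8/315)·∑_{k=n+1}^∞ 1/(k³(k²−1)³)`. -/
theorem kummer_transformation (n : ℕ) (hn : 0 < n) (m : ℝ) (hm : m = n * (n + 1) / 2) :
    Summable (fun j : ℕ => 1 / (((n : ℝ) + 1 + j) * (((n : ℝ) + 1 + j) ^ 2 - 1) ^ 3)) ∧
    Summable (fun j : ℕ => 1 / (((n : ℝ) + 1 + j) ^ 3 * (((n : ℝ) + 1 + j) ^ 2 - 1) ^ 3)) ∧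
    (8 / 105) * (∑' j : ℕ, 1 / (((n : ℝ) + 1 + j) * (((n : ℝ) + 1 + j) ^ 2 - 1) ^ 3))
      = 1 / (630 * m ^ 3)
        - (8 / 315) * ∑' j : ℕ,
            1 / (((n : ℝ) + 1 + j) ^ 3 * (((n : ℝ) + 1 + j) ^ 2 - 1) ^ 3) := by
  have hn1 : (1 : ℝ) ≤ (n : ℝ) := by exact_mod_cast hn
  set f : ℕ → ℝ := fun j => 1 / (((n : ℝ) + 1 + j) * (((n : ℝ) + 1 + j) ^ 2 - 1) ^ 3) with hf
  set g : ℕ → ℝ := fun j => 1 / (((n : ℝ) + 1 + j) ^ 3 * (((n : ℝ) + 1 + j) ^ 2 - 1) ^ 3) with hg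
  set b : ℕ → ℝ := fun j => 4 / (315 * ((n : ℝ) + j) ^ 3 * ((n : ℝ) + j + 1) ^ 3) with hb
  have hx2 : ∀ j : ℕ, (2 : ℝ) ≤ (n : ℝ) + 1 + j := by
    intro j
    have : (0 : ℝ) ≤ j := Nat.cast_nonneg j
    linarith
  have key : ∀ j : ℕ, (8 / 105) * f j + (8 / 315) * g j = b j - b (j + 1) := by
    intro j
    have hx := hx2 j
    set x : ℝ := (n : ℝ) + 1 + j with hxdef
    have h0 : x ≠ 0 := by linarith
    have h1 : x - 1 ≠ 0 := by intro h; nlinarith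
    have h2 : x + 1 ≠ 0 := by intro h; nlinarith
    have hsq : x ^ 2 - 1 = (x - 1) * (x + 1) := by ring
    have hbj : b j = 4 / (315 * (x - 1) ^ 3 * x ^ 3) := by
      simp only [hb, hxdef]; ring_nf
    have hbj1 : b (j + 1) = 4 / (315 * x ^ 3 * (x + 1) ^ 3) := by
      simp only [hb, hxdef]; push_cast; ring_nf
    simp only [hf, hg, hbj, hbj1, hsq]
    simp only [← hxdef, hsq]
    field_simp
    ring
  have hfpos : ∀ j : ℕ, 0 ≤ f j := by
    intro j
    have hx := hx2 j
    have hsq : (0:ℝ) < ((n : ℝ) + 1 + j) ^ 2 - 1 := by nlinarith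
    apply div_nonneg (by norm_num)
    positivity
  have hgpos : ∀ j : ℕ, 0 ≤ g j := by
    intro j
    have hx := hx2 j
    have hsq : (0:ℝ) < ((n : ℝ) + 1 + j) ^ 2 - 1 := by nlinarith
    apply div_nonneg (by norm_num)
    positivity
  have hbto : Filter.Tendsto b Filter.atTop (nhds 0) := by
    apply squeeze_zero (g := fun j : ℕ => 1 / ((j : ℝ) + 1))
    · intro j
      have : (1:ℝ) ≤ (n:ℝ) + j := by have := Nat.cast_nonneg (α := ℝ) j; linarith
      rw [hb]
      positivity
    · intro j
      have hj : (0 : ℝ) ≤ j := Nat.cast_nonneg j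
      have h1 : (j : ℝ) + 1 ≤ (n : ℝ) + j := by linarith
      rw [hb, div_le_div_iff₀ (by positivity) (by positivity)]
      have e1 : (1:ℝ) ≤ (n:ℝ)+j := by linarith
      have q1 : (1:ℝ) ≤ ((n:ℝ)+j)^2 := one_le_pow₀ e1
      have p1 : (j:ℝ)+1 ≤ ((n:ℝ)+j)^3 := by nlinarith
      have p2 : (1:ℝ) ≤ ((n:ℝ)+j+1)^3 := one_le_pow₀ (by linarith)
      have hA : (j:ℝ)+1 ≤ ((n:ℝ)+j)^3 * ((n:ℝ)+j+1)^3 :=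
        p1.trans (le_mul_of_one_le_right (by positivity) p2)
      linarith
    · exact tendsto_one_div_add_atTop_nhds_zero_nat
  have hS : HasSum (fun j => (8 / 105) * f j + (8 / 315) * g j) (b 0) := by
    rw [hasSum_iff_tendsto_nat_of_nonneg
      (fun j => by have := hfpos j; have := hgpos j; positivity)]
    have heq : ∀ N : ℕ, ∑ j ∈ Finset.range N, ((8 / 105) * f j + (8 / 315) * g j)
        = b 0 - b N := by
      intro N
      rw [Finset.sum_congr rfl fun j _ => key j, Finset.sum_range_sub' b N]
    simp only [heq]
    have := hbto
    have : Filter.Tendsto (fun N : ℕ => b 0 - b N) Filter.atTop (nhds (b 0 - 0)) :=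
      Filter.Tendsto.sub tendsto_const_nhds hbto
    simpa using this
  have hfg : Summable (fun j => (8 / 105) * f j + (8 / 315) * g j) := hS.summable
  have hfsum : Summable f := by
    refine Summable.of_nonneg_of_le hfpos (fun j => ?_) (hfg.mul_left (105/8))
    have := hgpos j
    nlinarith [hfpos j]
  have hgsum : Summable g := by
    refine Summable.of_nonneg_of_le hgpos (fun j => ?_) hfsum
    have hx := hx2 j
    have hsq : (0:ℝ) < ((n : ℝ) + 1 + j) ^ 2 - 1 := by nlinarith
    have hx3 : ((n : ℝ) + 1 + j) ≤ ((n : ℝ) + 1 + j) ^ 3 := by nlinarith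
    simp only [hf, hg]
    gcongr
  refine ⟨hfsum, hgsum, ?_⟩
  have htsum : (8 / 105) * (∑' j, f j) + (8 / 315) * (∑' j, g j) = b 0 := by
    rw [← tsum_mul_left, ← tsum_mul_left, ← Summable.tsum_add (hfsum.mul_left _) (hgsum.mul_left _)]
    exact hS.tsum_eq
  have hb0 : b 0 = 1 / (630 * m ^ 3) := by
    have hnne : (n : ℝ) ≠ 0 := by linarith
    rw [hb, hm]
    push_cast
    field_simp
    ring
  rw [← hb0]
  linarith [htsum]
end

section
/- For every positive integer n, with m = n(n+1)/2 and ε_n = H_n − (1/2)·ln(n(n+1)) − γ, one has ε_n = 1/(12m) − 1/(120m²) + 1/(630m³) − (8/315)·∑_{k=n+1}^∞ 1/(k³(k² − 1)³) − (16/35)·∑_{k=n+1}^∞ ∫₀¹ t⁸/(k(k² − t²)⁴) dt, all series on the right being convergent. -/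
open Real Filter Topology


noncomputable def Fm (m : ℝ) : ℝ := 1/(12*m) - 1/(120*m^2) + 1/(630*m^3)
noncomputable def Fx (x : ℝ) : ℝ := Fm (x*(x+1)/2)

lemma Fm_nonneg {m : ℝ} (hm : 1 ≤ m) : 0 ≤ Fm m := by
  unfold Fm
  have h0 : (0:ℝ) < m := by linarith
  rw [show 1/(12*m) - 1/(120*m^2) + 1/(630*m^3) = (210*m^2 - 21*m + 4)/(2520*m^3) from by
    field_simp; ring]
  apply div_nonneg _ (by positivity)
  nlinarith [sq_nonneg (m - 1)]

lemma Fm_anti {m1 m2 : ℝ} (h1 : 1 ≤ m1) (h12 : m1 ≤ m2) : Fm m2 ≤ Fm m1 := by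
  unfold Fm
  have h01 : (0:ℝ) < m1 := by linarith
  have h02 : (0:ℝ) < m2 := by linarith
  have e1 : ∀ m : ℝ, 0 < m → 1/(12*m) - 1/(120*m^2) + 1/(630*m^3)
      = (210*m^2 - 21*m + 4)/(2520*m^3) := by
    intro m hm; field_simp; ring
  rw [e1 m1 h01, e1 m2 h02]
  rw [div_le_div_iff₀ (by positivity) (by positivity)]
  nlinarith [mul_pos h01 h02, sq_nonneg (m1*m2),
    mul_nonneg (mul_nonneg h01.le h02.le) (sub_nonneg.2 h12), sq_nonneg (m2-m1),
    mul_le_mul_of_nonneg_left h12 h01.le]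

lemma Fx_nonneg {x : ℝ} (hx : 1 ≤ x) : 0 ≤ Fx x := Fm_nonneg (by nlinarith)

lemma Fx_step_nonneg {x : ℝ} (hx : 2 ≤ x) : Fx x ≤ Fx (x-1) := by
  unfold Fx
  exact Fm_anti (by nlinarith) (by nlinarith)

lemma tendsto_Fx_zero : Tendsto Fx atTop (𝓝 0) := by
  have hm : Tendsto (fun x : ℝ => x*(x+1)/2) atTop atTop := by
    apply Tendsto.atTop_div_const (by norm_num)
    exact tendsto_id.atTop_mul_atTop₀ (tendsto_atTop_add_const_right atTop 1 tendsto_id)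
  have hFm : Tendsto Fm atTop (𝓝 0) := by
    have i1 : Tendsto (fun m : ℝ => 1/(12*m)) atTop (𝓝 0) :=
      tendsto_const_nhds.div_atTop (tendsto_id.const_mul_atTop (by norm_num))
    have i2 : Tendsto (fun m : ℝ => 1/(120*m^2)) atTop (𝓝 0) :=
      tendsto_const_nhds.div_atTop ((tendsto_pow_atTop two_ne_zero).const_mul_atTop (by norm_num))
    have i3 : Tendsto (fun m : ℝ => 1/(630*m^3)) atTop (𝓝 0) :=
      tendsto_const_nhds.div_atTop ((tendsto_pow_atTop three_ne_zero).const_mul_atTop (by norm_num))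
    have h := (i1.sub i2).add i3
    rw [show (0:ℝ) - 0 + 0 = 0 from by ring] at h
    exact h.congr (fun m => by unfold Fm; ring)
  exact hFm.comp hm

lemma tendsto_harmonic_half :
    Tendsto (fun N : ℕ => (harmonic N : ℝ) - (1/2)*Real.log ((N:ℝ)*((N:ℝ)+1))) atTop
      (𝓝 Real.eulerMascheroniConstant) := by
  have h1 := Real.tendsto_harmonic_sub_log
  have h2 : Tendsto (fun N : ℕ => Real.log (1 + 1/(N:ℝ))) atTop (𝓝 0) := by
    have h3 : Tendsto (fun N : ℕ => 1 + 1/(N:ℝ)) atTop (𝓝 1) := by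
      simpa using tendsto_one_div_atTop_nhds_zero_nat.const_add (1:ℝ)
    have := ((Real.continuousAt_log one_ne_zero).tendsto.comp h3)
    simpa [Function.comp_def] using this
  have h4 := h1.sub (h2.const_mul (1/2))
  rw [mul_zero, sub_zero] at h4
  apply h4.congr'
  filter_upwards [eventually_ge_atTop 1] with N hN
  have hN0 : (0:ℝ) < N := by exact_mod_cast hN
  rw [show (1:ℝ) + 1/(N:ℝ) = ((N:ℝ)+1)/N from by field_simp,
    Real.log_div (by positivity) (by positivity),
    Real.log_mul (by positivity) (by positivity)]
  ring

lemma intInt (x : ℝ) (hx : 2 ≤ x) :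
    IntervalIntegrable (fun t : ℝ => t ^ 8 / (x * (x ^ 2 - t ^ 2) ^ 4))
      MeasureTheory.volume 0 1 := by
  apply ContinuousOn.intervalIntegrable
  apply ContinuousOn.div (by fun_prop) (by fun_prop)
  intro t ht
  rw [Set.uIcc_of_le (by norm_num)] at ht
  obtain ⟨h0, h1⟩ := ht
  have hm : x - t ≠ 0 := by nlinarith
  have hp : x + t ≠ 0 := by nlinarith
  have hx0 : x ≠ 0 := by nlinarith
  rw [show x ^ 2 - t ^ 2 = (x - t) * (x + t) from by ring]
  exact mul_ne_zero hx0 (pow_ne_zero 4 (mul_ne_zero hm hp))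

lemma integral_eval (x : ℝ) (hx : 2 ≤ x) :
    ∫ t in (0:ℝ)..1, t ^ 8 / (x * (x ^ 2 - t ^ 2) ^ 4)
      = 1/x - (35/32) * (Real.log (x+1) - Real.log (x-1))
        + (29*x/32) * (1/(x-1) - 1/(x+1))
        - (3*x^2/16) * (1/(x-1)^2 - 1/(x+1)^2)
        + (x^3/48) * (1/(x-1)^3 - 1/(x+1)^3) := by
  have hne : ∀ t ∈ Set.uIcc (0:ℝ) 1, x - t ≠ 0 ∧ x + t ≠ 0 := by
    intro t ht
    rw [Set.uIcc_of_le (by norm_num)] at ht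
    obtain ⟨h0, h1⟩ := ht
    constructor <;> nlinarith
  set G : ℝ → ℝ := fun t => t/x - (35/32) * (Real.log (x+t) - Real.log (x-t))
      + (29*x/32) * (1/(x-t) - 1/(x+t))
      - (3*x^2/16) * (1/(x-t)^2 - 1/(x+t)^2)
      + (x^3/48) * (1/(x-t)^3 - 1/(x+t)^3) with hG
  have hderiv : ∀ t ∈ Set.uIcc (0:ℝ) 1,
      HasDerivAt G (t ^ 8 / (x * (x ^ 2 - t ^ 2) ^ 4)) t := by
    intro t ht
    obtain ⟨hm, hp⟩ := hne t ht
    have hsub : HasDerivAt (fun t : ℝ => x - t) (-1) t := by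
      simpa using (hasDerivAt_id t).const_sub x
    have hadd : HasDerivAt (fun t : ℝ => x + t) 1 t := by
      simpa using (hasDerivAt_id t).const_add x
    have hx0 : x ≠ 0 := by nlinarith
    have H : HasDerivAt G
        (1/x - (35/32) * (1/(x+t) - (-1)/(x-t))
          + (29*x/32) * ((0*(x-t) - 1*(-1))/(x-t)^2 - (0*(x+t) - 1*1)/(x+t)^2)
          - (3*x^2/16) * ((0*(x-t)^2 - 1*(2*(x-t)^1*(-1)))/((x-t)^2)^2
              - (0*(x+t)^2 - 1*(2*(x+t)^1*1))/((x+t)^2)^2)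
          + (x^3/48) * ((0*(x-t)^3 - 1*(3*(x-t)^2*(-1)))/((x-t)^3)^2
              - (0*(x+t)^3 - 1*(3*(x+t)^2*1))/((x+t)^3)^2)) t := by
      exact ((((hasDerivAt_id t).div_const x).sub
          (((hadd.log hp).sub (hsub.log hm)).const_mul (35/32))).add
          ((((hasDerivAt_const t 1).div hsub hm).sub
            ((hasDerivAt_const t 1).div hadd hp)).const_mul (29*x/32))).sub
          ((((hasDerivAt_const t 1).div (hsub.pow 2) (pow_ne_zero 2 hm)).sub
            ((hasDerivAt_const t 1).div (hadd.pow 2) (pow_ne_zero 2 hp))).const_mul (3*x^2/16))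
        |>.add
          ((((hasDerivAt_const t 1).div (hsub.pow 3) (pow_ne_zero 3 hm)).sub
            ((hasDerivAt_const t 1).div (hadd.pow 3) (pow_ne_zero 3 hp))).const_mul (x^3/48))
    convert H using 1
    rw [show x ^ 2 - t ^ 2 = (x - t) * (x + t) from by ring]
    field_simp
    ring
  rw [intervalIntegral.integral_eq_sub_of_hasDerivAt hderiv (intInt x hx)]
  simp only [hG]
  norm_num

lemma key_identity (x : ℝ) (hx : 2 ≤ x) :
    (1/2)*Real.log (x*(x+1)) - (1/2)*Real.log ((x-1)*x) - 1/x
      = Fx (x-1) - Fx x - (8/315) * (1/(x^3*(x^2-1)^3))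
        - (16/35) * ∫ t in (0:ℝ)..1, t ^ 8 / (x * (x ^ 2 - t ^ 2) ^ 4) := by
  have hx0 : x ≠ 0 := by nlinarith
  have hm1 : x - 1 ≠ 0 := by nlinarith
  have hp1 : x + 1 ≠ 0 := by nlinarith
  have hsq : x^2 - 1 ≠ 0 := by nlinarith
  rw [integral_eval x hx, Real.log_mul hx0 hp1, Real.log_mul hm1 hx0]
  unfold Fx Fm
  rw [show x - 1 + 1 = x from by ring]
  field_simp
  ring

lemma integral_nonneg' (x : ℝ) (hx : 2 ≤ x) :
    0 ≤ ∫ t in (0:ℝ)..1, t ^ 8 / (x * (x ^ 2 - t ^ 2) ^ 4) := by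
  apply intervalIntegral.integral_nonneg (by norm_num)
  intro u hu
  apply div_nonneg (by positivity)
  apply mul_nonneg (by linarith) (by positivity)

lemma integral_le (x : ℝ) (hx : 2 ≤ x) :
    (∫ t in (0:ℝ)..1, t ^ 8 / (x * (x ^ 2 - t ^ 2) ^ 4)) ≤ 1/x^2 := by
  have h := intervalIntegral.integral_mono_on (by norm_num : (0:ℝ) ≤ 1) (intInt x hx)
    (intervalIntegrable_const (c := 1/x^2)) ?_
  · simpa using h
  · intro t ht
    obtain ⟨h0, h1⟩ := ht
    have ha : (1:ℝ) ≤ x^2 - t^2 := by nlinarith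
    have hb : x ≤ x^2 - t^2 := by nlinarith
    have hc : (x^2 - t^2) ≤ (x^2 - t^2)^4 := le_self_pow₀ ha (by norm_num)
    have hd : x^2 ≤ x * (x^2 - t^2)^4 := by nlinarith
    have ht8 : t^8 ≤ 1 := by
      calc t^8 ≤ 1^8 := by apply pow_le_pow_left₀ h0 h1
      _ = 1 := by norm_num
    calc t ^ 8 / (x * (x ^ 2 - t ^ 2) ^ 4) ≤ 1 / x^2 := by
          apply div_le_div₀ (by norm_num) ht8 (by positivity) hd

/-- Three-term expansion:
`εₙ = 1/(12m) − 1/(120m²) + 1/(630m³) − (8/315)·∑ 1/(k³(k²−1)³)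
  − (16/35)·∑ ∫₀¹ t⁸/(k(k²−t²)⁴) dt`, sums over `k ≥ n+1`. -/
theorem epsilon_three_terms (n : ℕ) (hn : 0 < n) (m : ℝ) (hm : m = n * (n + 1) / 2)
    (ε : ℝ) (hε : ε = (harmonic n : ℝ) - (1 / 2) * Real.log (n * (n + 1))
      - Real.eulerMascheroniConstant) :
    Summable (fun j : ℕ => 1 / (((n : ℝ) + 1 + j) ^ 3 * (((n : ℝ) + 1 + j) ^ 2 - 1) ^ 3)) ∧
    Summable (fun j : ℕ =>
        ∫ t in (0:ℝ)..1, t ^ 8 / ((n + 1 + j) * (((n : ℝ) + 1 + j) ^ 2 - t ^ 2) ^ 4)) ∧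
    ε = 1 / (12 * m) - 1 / (120 * m ^ 2) + 1 / (630 * m ^ 3)
        - (8 / 315) * (∑' j : ℕ,
            1 / (((n : ℝ) + 1 + j) ^ 3 * (((n : ℝ) + 1 + j) ^ 2 - 1) ^ 3))
        - (16 / 35) * ∑' j : ℕ,
            ∫ t in (0:ℝ)..1, t ^ 8 / ((n + 1 + j) * (((n : ℝ) + 1 + j) ^ 2 - t ^ 2) ^ 4) := by
  have hn1 : (1:ℝ) ≤ n := by exact_mod_cast hn
  have hx2 : ∀ j : ℕ, (2:ℝ) ≤ (n:ℝ) + 1 + j := by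
    intro j
    have hj : (0:ℝ) ≤ j := Nat.cast_nonneg j
    linarith
  set c : ℕ → ℝ :=
    fun j => 1 / (((n : ℝ) + 1 + j) ^ 3 * (((n : ℝ) + 1 + j) ^ 2 - 1) ^ 3) with hc_def
  set d : ℕ → ℝ :=
    fun j => ∫ t in (0:ℝ)..1,
      t ^ 8 / (((n:ℝ) + 1 + j) * (((n : ℝ) + 1 + j) ^ 2 - t ^ 2) ^ 4) with hd_def
  -- summable bounds
  have hsumb : Summable (fun j : ℕ => 1/((j:ℝ)+1)^2) := by
    have h1 : Summable (fun k : ℕ => 1/(k:ℝ)^2) := summable_one_div_nat_pow.mpr (by norm_num)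
    have h2 := (summable_nat_add_iff 1).mpr h1
    apply h2.congr
    intro j; push_cast; ring
  have hxb : ∀ j : ℕ, 1/((n:ℝ)+1+j)^2 ≤ 1/((j:ℝ)+1)^2 := by
    intro j
    apply one_div_le_one_div_of_le (by positivity)
    have hj : (0:ℝ) ≤ j := Nat.cast_nonneg j
    nlinarith
  have hcpos : ∀ j, 0 ≤ c j := by
    intro j
    have h2 := hx2 j
    apply div_nonneg (by norm_num)
    exact mul_nonneg (by positivity) (pow_nonneg (by nlinarith) 3)
  have hcle : ∀ j, c j ≤ 1/((j:ℝ)+1)^2 := by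
    intro j
    refine le_trans ?_ (hxb j)
    apply one_div_le_one_div_of_le (by positivity)
    have h2 := hx2 j
    have h1 : (1:ℝ) ≤ ((n:ℝ)+1+j)^2 - 1 := by nlinarith
    have h3 : (1:ℝ) ≤ (((n:ℝ)+1+j)^2 - 1)^3 :=
      le_trans h1 (le_self_pow₀ h1 (by norm_num))
    nlinarith [mul_le_mul_of_nonneg_left h3 (by positivity : (0:ℝ) ≤ ((n:ℝ)+1+j)^3)]
  have hcsummable : Summable c := Summable.of_nonneg_of_le hcpos hcle hsumb
  have hdpos : ∀ j, 0 ≤ d j := fun j => integral_nonneg' _ (hx2 j)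
  have hdle : ∀ j, d j ≤ 1/((j:ℝ)+1)^2 := fun j => le_trans (integral_le _ (hx2 j)) (hxb j)
  have hdsummable : Summable d := Summable.of_nonneg_of_le hdpos hdle hsumb
  -- telescoping F
  set F : ℕ → ℝ := fun N => Fx ((n:ℝ) + N) with hF
  have hFe : ∀ j : ℕ, F (j+1) = Fx ((n:ℝ)+1+j) := by
    intro j
    simp only [hF]
    norm_num
    ring_nf
  have hT0 : ∀ j : ℕ, 0 ≤ F j - F (j+1) := by
    intro j
    have h := Fx_step_nonneg (hx2 j)
    rw [show (n:ℝ)+1+(j:ℝ)-1 = (n:ℝ)+j from by ring] at h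
    rw [hFe j]
    simp only [hF]
    linarith
  have hTsum0 : ∀ N, ∑ j ∈ Finset.range N, (F j - F (j+1)) = F 0 - F N :=
    fun N => Finset.sum_range_sub' F N
  have hFpos : ∀ N : ℕ, 0 ≤ F N := by
    intro N
    apply Fx_nonneg
    have : (0:ℝ) ≤ N := Nat.cast_nonneg N
    linarith
  have hTsummable : Summable (fun j => F j - F (j+1)) := by
    apply summable_of_sum_range_le (c := F 0) hT0
    intro N
    rw [hTsum0]
    linarith [hFpos N]
  have hFlim : Tendsto F atTop (𝓝 0) := by
    apply tendsto_Fx_zero.comp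
    exact tendsto_atTop_add_const_left _ _ tendsto_natCast_atTop_atTop
  have hThasSum : HasSum (fun j => F j - F (j+1)) (F 0) := by
    have h1 := hTsummable.hasSum
    have h2 : Tendsto (fun N => ∑ j ∈ Finset.range N, (F j - F (j+1))) atTop (𝓝 (F 0)) := by
      simp only [hTsum0]
      simpa using tendsto_const_nhds.sub hFlim
    rw [tendsto_nhds_unique h1.tendsto_sum_nat h2] at h1
    exact h1
  -- HasSum of the combination
  have hg : HasSum (fun j => (F j - F (j+1)) - (8/315)*c j - (16/35)*d j)
      (F 0 - (8/315)*(∑' j, c j) - (16/35)*(∑' j, d j)) :=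
    (hThasSum.sub (hcsummable.hasSum.mul_left _)).sub (hdsummable.hasSum.mul_left _)
  -- telescoping phi
  set φ : ℕ → ℝ :=
    fun N => (1/2)*Real.log (((n:ℝ)+N)*((n:ℝ)+N+1)) - (harmonic (n+N) : ℝ) with hφ
  have hstep : ∀ j : ℕ,
      (F j - F (j+1)) - (8/315)*c j - (16/35)*d j = φ (j+1) - φ j := by
    intro j
    have hk := key_identity ((n:ℝ)+1+j) (hx2 j)
    rw [show (n:ℝ)+1+(j:ℝ)-1 = (n:ℝ)+j from by ring] at hk
    have hharm : (harmonic (n+(j+1)) : ℝ) = (harmonic (n+j) : ℝ) + 1/((n:ℝ)+1+j) := by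
      rw [show n + (j+1) = (n+j) + 1 from rfl, harmonic_succ]
      push_cast
      ring
    have eφ : φ (j+1) - φ j = (1/2)*Real.log (((n:ℝ)+1+j)*(((n:ℝ)+1+j)+1))
        - (1/2)*Real.log ((((n:ℝ)+j))*((n:ℝ)+1+j)) - 1/((n:ℝ)+1+j) := by
      simp only [hφ]
      rw [hharm]
      push_cast
      ring_nf
    rw [eφ, hFe j]
    simp only [hF, hc_def, hd_def]
    exact hk.symm
  have hgsum : ∀ N, ∑ j ∈ Finset.range N,
      ((F j - F (j+1)) - (8/315)*c j - (16/35)*d j) = φ N - φ 0 := by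
    intro N
    rw [Finset.sum_congr rfl (fun j _ => hstep j)]
    exact Finset.sum_range_sub φ N
  have hφlim : Tendsto φ atTop (𝓝 (- Real.eulerMascheroniConstant)) := by
    have h1 := (tendsto_harmonic_half.comp (tendsto_add_atTop_nat n)).neg
    apply h1.congr
    intro N
    simp only [Function.comp]
    rw [Nat.add_comm N n]
    push_cast
    ring
  have hφ0 : φ 0 = (1/2)*Real.log ((n:ℝ)*((n:ℝ)+1)) - (harmonic n : ℝ) := by
    simp only [hφ, Nat.add_zero, Nat.cast_zero, add_zero]
  have hεlim : Tendsto (fun N => ∑ j ∈ Finset.range N,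
      ((F j - F (j+1)) - (8/315)*c j - (16/35)*d j)) atTop (𝓝 ε) := by
    simp only [hgsum]
    have he : ε = -Real.eulerMascheroniConstant - φ 0 := by
      rw [hε, hφ0]; push_cast; ring
    rw [he]
    exact hφlim.sub_const _
  have hεval : ε = F 0 - (8/315)*(∑' j, c j) - (16/35)*(∑' j, d j) :=
    tendsto_nhds_unique hεlim hg.tendsto_sum_nat
  refine ⟨hcsummable, hdsummable, ?_⟩
  rw [hεval]
  have hF0 : F 0 = 1/(12*m) - 1/(120*m^2) + 1/(630*m^3) := by
    simp only [hF, Nat.cast_zero, add_zero]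
    unfold Fx Fm
    rw [hm]
  rw [hF0]
end

section
/- For every integer n ≥ 3, the quantity (32/3465)·∑_{k=n+1}^∞ (41k² + 3)/(k⁵(k² − 1)⁵) + (256/9009)·∑_{k=n+1}^∞ 1/(k(k² − 1)⁶) − (1024/3003)·∑_{k=n+1}^∞ ∫₀¹ t¹⁴/(k(k² − t²)⁷) dt is strictly positive. -/
open Real

/-- Positivity of the bracketed remainder for `n ≥ 3`:
`(32/3465)·∑ (41k²+3)/(k⁵(k²−1)⁵) + (256/9009)·∑ 1/(k(k²−1)⁶)
  − (1024/3003)·∑ ∫₀¹ t¹⁴/(k(k²−t²)⁷) dt > 0`, sums over `k ≥ n+1`. -/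
theorem remainder_positive (n : ℕ) (hn : 3 ≤ n) :
    0 < (32 / 3465) * (∑' j : ℕ, (41 * ((n : ℝ) + 1 + j) ^ 2 + 3)
          / (((n : ℝ) + 1 + j) ^ 5 * (((n : ℝ) + 1 + j) ^ 2 - 1) ^ 5))
        + (256 / 9009) * (∑' j : ℕ,
            1 / (((n : ℝ) + 1 + j) * (((n : ℝ) + 1 + j) ^ 2 - 1) ^ 6))
        - (1024 / 3003) * ∑' j : ℕ,
            ∫ t in (0:ℝ)..1, t ^ 14 / ((n + 1 + j) * (((n : ℝ) + 1 + j) ^ 2 - t ^ 2) ^ 7) := by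
  have hn3 : (3 : ℝ) ≤ (n : ℝ) := by exact_mod_cast hn
  have hk4 : ∀ j : ℕ, (4 : ℝ) ≤ (n : ℝ) + 1 + j := fun j => by
    have : (0:ℝ) ≤ j := Nat.cast_nonneg j
    linarith
  have hk1 : ∀ j : ℕ, (j : ℝ) + 1 ≤ (n : ℝ) + 1 + j := fun j => by linarith
  have hksq : ∀ j : ℕ, (15 : ℝ) ≤ ((n : ℝ) + 1 + j) ^ 2 - 1 := fun j => by
    nlinarith [hk4 j]
  -- notation
  set g : ℕ → ℝ := fun j => 1 / (((n : ℝ) + 1 + j) * (((n : ℝ) + 1 + j) ^ 2 - 1) ^ 6) with hg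
  set f : ℕ → ℝ := fun j =>
    ∫ t in (0:ℝ)..1, t ^ 14 / (((n : ℝ) + 1 + j) * (((n : ℝ) + 1 + j) ^ 2 - t ^ 2) ^ 7) with hf
  have hgpos : ∀ j, 0 < g j := fun j => by
    have h1 := hk4 j; have h2 := hksq j
    simp only [hg]
    positivity
  -- summability of g
  have hg_le : ∀ j : ℕ, g j ≤ 1 / ((j : ℝ) + 1) ^ 2 := fun j => by
    have h1 := hk4 j; have h2 := hksq j; have h3 := hk1 j
    have hkle : (n : ℝ) + 1 + j ≤ ((n : ℝ) + 1 + j) ^ 2 - 1 := by nlinarith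
    have hk6 : (n : ℝ) + 1 + j ≤ (((n : ℝ) + 1 + j) ^ 2 - 1) ^ 6 :=
      le_trans hkle (le_self_pow₀ (by linarith) (by norm_num))
    have hb : ((j : ℝ) + 1) ^ 2 ≤ ((n : ℝ) + 1 + j) * (((n : ℝ) + 1 + j) ^ 2 - 1) ^ 6 := by
      nlinarith [mul_le_mul_of_nonneg_left hk6 (by linarith : (0:ℝ) ≤ (n : ℝ) + 1 + j)]
    exact one_div_le_one_div_of_le (by positivity) hb
  have hbase : Summable (fun j : ℕ => 1 / ((j : ℝ) + 1) ^ 2) := by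
    have h := (Real.summable_one_div_nat_pow (p := 2)).mpr (by norm_num)
    have := (summable_nat_add_iff (f := fun j : ℕ => 1 / (j : ℝ) ^ 2) 1).mpr h
    refine this.congr fun j => ?_
    push_cast
    ring_nf
  have hgsum : Summable g :=
    Summable.of_nonneg_of_le (fun j => (hgpos j).le) hg_le hbase
  -- pointwise bound on the integrals
  have hfle : ∀ j : ℕ, f j ≤ g j / 15 := by
    intro j
    have h1 := hk4 j; have h2 := hksq j
    have hden : ∀ t ∈ Set.Icc (0:ℝ) 1, (14 : ℝ) ≤ ((n : ℝ) + 1 + j) ^ 2 - t ^ 2 := by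
      intro t ht
      have ht1 : t ^ 2 ≤ 1 := by nlinarith [ht.1, ht.2]
      nlinarith
    have hcont : ContinuousOn
        (fun t : ℝ => t ^ 14 / (((n : ℝ) + 1 + j) * (((n : ℝ) + 1 + j) ^ 2 - t ^ 2) ^ 7))
        (Set.Icc (0:ℝ) 1) := by
      apply ContinuousOn.div (by fun_prop) (by fun_prop)
      intro t ht
      have := hden t ht
      positivity
    have hint : IntervalIntegrable
        (fun t : ℝ => t ^ 14 / (((n : ℝ) + 1 + j) * (((n : ℝ) + 1 + j) ^ 2 - t ^ 2) ^ 7))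
        MeasureTheory.volume 0 1 := by
      apply ContinuousOn.intervalIntegrable
      rwa [Set.uIcc_of_le (by norm_num)]
    have hbd : ∀ t ∈ Set.Icc (0:ℝ) 1,
        t ^ 14 / (((n : ℝ) + 1 + j) * (((n : ℝ) + 1 + j) ^ 2 - t ^ 2) ^ 7)
          ≤ 1 / (((n : ℝ) + 1 + j) * (((n : ℝ) + 1 + j) ^ 2 - 1) ^ 7) := by
      intro t ht
      have ht14 : t ^ 14 ≤ 1 := pow_le_one₀ ht.1 ht.2
      have hd := hden t ht
      have hdle : ((n : ℝ) + 1 + j) * (((n : ℝ) + 1 + j) ^ 2 - 1) ^ 7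
          ≤ ((n : ℝ) + 1 + j) * (((n : ℝ) + 1 + j) ^ 2 - t ^ 2) ^ 7 := by
        have : (((n : ℝ) + 1 + j) ^ 2 - 1) ^ 7 ≤ (((n : ℝ) + 1 + j) ^ 2 - t ^ 2) ^ 7 := by
          apply pow_le_pow_left₀ (by linarith) (by nlinarith [ht.1, ht.2])
        exact mul_le_mul_of_nonneg_left this (by linarith)
      exact div_le_div₀ (by norm_num) ht14 (by positivity) hdle
    have hstep : f j ≤ 1 / (((n : ℝ) + 1 + j) * (((n : ℝ) + 1 + j) ^ 2 - 1) ^ 7) := by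
      have := intervalIntegral.integral_mono_on (by norm_num) hint
        (intervalIntegrable_const) hbd
      simpa using this
    refine hstep.trans ?_
    have hden15 : 15 * (((n : ℝ) + 1 + j) * (((n : ℝ) + 1 + j) ^ 2 - 1) ^ 6)
        ≤ ((n : ℝ) + 1 + j) * (((n : ℝ) + 1 + j) ^ 2 - 1) ^ 7 := by
      have : (((n : ℝ) + 1 + j) ^ 2 - 1) ^ 7
          = (((n : ℝ) + 1 + j) ^ 2 - 1) * (((n : ℝ) + 1 + j) ^ 2 - 1) ^ 6 := by ring
      rw [this]
      have h6 : (0:ℝ) ≤ (((n : ℝ) + 1 + j) ^ 2 - 1) ^ 6 := by positivity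
      have h15 : 15 * (((n : ℝ) + 1 + j) ^ 2 - 1) ^ 6
          ≤ (((n : ℝ) + 1 + j) ^ 2 - 1) * (((n : ℝ) + 1 + j) ^ 2 - 1) ^ 6 :=
        mul_le_mul_of_nonneg_right h2 h6
      calc 15 * (((n : ℝ) + 1 + j) * (((n : ℝ) + 1 + j) ^ 2 - 1) ^ 6)
          = ((n : ℝ) + 1 + j) * (15 * (((n : ℝ) + 1 + j) ^ 2 - 1) ^ 6) := by ring
        _ ≤ ((n : ℝ) + 1 + j) * ((((n : ℝ) + 1 + j) ^ 2 - 1) * (((n : ℝ) + 1 + j) ^ 2 - 1) ^ 6) :=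
            mul_le_mul_of_nonneg_left h15 (by linarith)
    rw [hg]
    rw [div_div]
    exact one_div_le_one_div_of_le (by positivity) (by linarith)
  have hfnonneg : ∀ j : ℕ, 0 ≤ f j := fun j => by
    have h2 := hksq j
    apply intervalIntegral.integral_nonneg (by norm_num)
    intro t ht
    have : (14 : ℝ) ≤ ((n : ℝ) + 1 + j) ^ 2 - t ^ 2 := by nlinarith [ht.1, ht.2, hk4 j]
    positivity
  have hfsum : Summable f :=
    Summable.of_nonneg_of_le hfnonneg hfle (hgsum.div_const 15)
  have htsumle : (∑' j, f j) ≤ (∑' j, g j) / 15 := by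
    calc (∑' j, f j) ≤ ∑' j, g j / 15 := Summable.tsum_le_tsum hfle hfsum (hgsum.div_const 15)
      _ = (∑' j, g j) / 15 := by rw [tsum_div_const]
  have hSpos : 0 < ∑' j, g j := Summable.tsum_pos hgsum (fun j => (hgpos j).le) 0 (hgpos 0)
  have hA : 0 ≤ ∑' j : ℕ, (41 * ((n : ℝ) + 1 + j) ^ 2 + 3)
      / (((n : ℝ) + 1 + j) ^ 5 * (((n : ℝ) + 1 + j) ^ 2 - 1) ^ 5) := by
    apply tsum_nonneg
    intro j
    have h1 := hk4 j; have h2 := hksq j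
    positivity
  linarith
end

section
/- With m = n(n+1)/2 and R_n := (8/15)·∑_{k=n+1}^∞ ∫₀¹ t⁶/(k(k² − t²)³) dt, the remainder R_n is asymptotic to 1/(630m³); precisely, m³·R_n tends to 1/630 as n → ∞. -/
open Real Filter Topology

open intervalIntegral in
lemma intg (k : ℝ) (hk : 2 ≤ k) :
    IntervalIntegrable (fun t => t^6 / (k * (k^2 - t^2)^3)) MeasureTheory.volume 0 1 := by
  apply ContinuousOn.intervalIntegrable
  apply ContinuousOn.div (by fun_prop) (by fun_prop)
  intro t ht
  simp only [Set.uIcc_of_le (by norm_num : (0:ℝ) ≤ 1), Set.mem_Icc] at ht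
  have h1 : k^2 - t^2 ≥ 3 := by nlinarith [ht.1, ht.2]
  positivity

lemma intbounds (k : ℝ) (hk : 2 ≤ k) :
    1/(7*k^7) ≤ (∫ t in (0:ℝ)..1, t^6 / (k * (k^2 - t^2)^3)) ∧
    (∫ t in (0:ℝ)..1, t^6 / (k * (k^2 - t^2)^3)) ≤ 1/(7*(k-1)^7) := by
  have hk0 : (0:ℝ) < k := by linarith
  have hk1 : (0:ℝ) ≤ k - 1 := by linarith
  have hk1' : (0:ℝ) < k - 1 := by linarith
  have hc1 : (∫ t in (0:ℝ)..1, t^6 / k^7) = 1/(7*k^7) := by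
    rw [intervalIntegral.integral_div, integral_pow,
      show ((1:ℝ)^(6+1) - 0^(6+1))/((6:ℕ)+1 : ℝ) = 1/7 by norm_num, div_div]
  have h15 : (0:ℝ) < k^2 - 1 := by nlinarith
  have hden : (0:ℝ) < k*(k^2-1)^3 := by positivity
  have hc2 : (∫ t in (0:ℝ)..1, t^6 / (k*(k^2-1)^3)) = 1/(7*(k*(k^2-1)^3)) := by
    rw [intervalIntegral.integral_div, integral_pow,
      show ((1:ℝ)^(6+1) - 0^(6+1))/((6:ℕ)+1 : ℝ) = 1/7 by norm_num, div_div]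
  constructor
  · rw [← hc1]
    apply intervalIntegral.integral_mono_on (by norm_num)
      (by apply ContinuousOn.intervalIntegrable; fun_prop) (intg k hk)
    intro t ht
    simp only [Set.mem_Icc] at ht
    have h1 : k^2 - t^2 ≥ 3 := by nlinarith [ht.1, ht.2]
    have hle : k^2 - t^2 ≤ k^2 := by nlinarith [sq_nonneg t]
    have hp := pow_le_pow_left₀ (by linarith : (0:ℝ) ≤ k^2 - t^2) hle 3
    have h2 : k*(k^2-t^2)^3 ≤ k^7 := by nlinarith [hp, hk0]
    exact div_le_div_of_nonneg_left (by positivity) (by positivity) h2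
  · have step : (∫ t in (0:ℝ)..1, t^6 / (k * (k^2 - t^2)^3)) ≤ 1/(7*(k*(k^2-1)^3)) := by
      rw [← hc2]
      apply intervalIntegral.integral_mono_on (by norm_num) (intg k hk)
        (by apply ContinuousOn.intervalIntegrable; fun_prop)
      intro t ht
      simp only [Set.mem_Icc] at ht
      have h1 : k^2 - t^2 ≥ k^2 - 1 := by nlinarith [ht.2, ht.1]
      have hp := pow_le_pow_left₀ h15.le h1 3
      have h2 : k*(k^2-1)^3 ≤ k*(k^2-t^2)^3 := by nlinarith [hp, hk0]
      exact div_le_div_of_nonneg_left (by positivity) (by positivity) h2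
    refine step.trans ?_
    have a1 : (k-1)^4 ≤ k^4 := pow_le_pow_left₀ hk1 (by linarith) 4
    have a2 : k^3 ≤ (k+1)^3 := pow_le_pow_left₀ (by linarith) (by linarith) 3
    have a3 : (0:ℝ) ≤ (k-1)^3 := by positivity
    have h3 : (k-1)^7 ≤ k*(k^2-1)^3 := by nlinarith [a1, a2, a3, hk0, mul_nonneg a3 hk0.le]
    have h4 : (0:ℝ) < (k-1)^7 := pow_pos hk1' 7
    exact div_le_div_of_nonneg_left (by norm_num) (by linarith) (by linarith)

lemma tele1 (a : ℝ) (ha : 1 ≤ a) : 1/((a+1)^7) ≤ 1/(6*a^6) - 1/(6*(a+1)^6) := by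
  have h0 : (0:ℝ) < a := by linarith
  have h1 : (0:ℝ) < a + 1 := by linarith
  rw [div_sub_div _ _ (by positivity) (by positivity), div_le_div_iff₀ (by positivity) (by positivity)]
  nlinarith [pow_pos h0 6, pow_pos h1 6, pow_pos h0 5, pow_pos h0 4, pow_pos h0 3,
    pow_pos h0 2, mul_pos (pow_pos h0 6) (pow_pos h1 6)]

lemma tele2 (a : ℝ) (ha : 1 ≤ a) : 1/(6*a^6) - 1/(6*(a+1)^6) ≤ 1/a^7 := by
  have h0 : (0:ℝ) < a := by linarith
  have h1 : (0:ℝ) < a + 1 := by linarith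
  rw [div_sub_div _ _ (by positivity) (by positivity), div_le_div_iff₀ (by positivity) (by positivity)]
  nlinarith [pow_pos h0 6, pow_pos h1 6, pow_pos h0 5, pow_pos h0 4, pow_pos h0 3,
    pow_pos h0 2, mul_pos (pow_pos h0 6) (pow_pos h1 6)]

lemma summ_shift (n : ℕ) : Summable (fun j : ℕ => 1/(((n:ℝ)+1+j))^7) := by
  have h : Summable (fun j : ℕ => 1/((j:ℝ))^7) := by
    simpa using Real.summable_one_div_nat_pow.2 (by norm_num : 1 < 7)
  have h2 := (summable_nat_add_iff (n+1)).2 h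
  refine h2.congr fun j => ?_
  push_cast
  ring_nf

lemma tail_upper (n : ℕ) (hn : 1 ≤ n) : ∑' j : ℕ, 1/(((n:ℝ)+1+j))^7 ≤ 1/(6*(n:ℝ)^6) := by
  apply tsum_le_of_sum_range_le (fun j => by positivity)
  intro N
  have key : ∀ j : ℕ, 1/(((n:ℝ)+1+j))^7 ≤ 1/(6*((n:ℝ)+j)^6) - 1/(6*((n:ℝ)+(j+1:ℕ))^6) := by
    intro j
    have := tele1 ((n:ℝ)+j) (by
      have h1 : (1:ℝ) ≤ (n:ℝ) := by exact_mod_cast hn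
      have h2 : (0:ℝ) ≤ (j:ℝ) := Nat.cast_nonneg j
      linarith)
    convert this using 2 <;> push_cast <;> ring
  calc ∑ j ∈ Finset.range N, 1/(((n:ℝ)+1+j))^7
      ≤ ∑ j ∈ Finset.range N, (1/(6*((n:ℝ)+j)^6) - 1/(6*((n:ℝ)+(j+1:ℕ))^6)) :=
        Finset.sum_le_sum fun j _ => key j
    _ = 1/(6*((n:ℝ)+(0:ℕ))^6) - 1/(6*((n:ℝ)+N)^6) :=
        Finset.sum_range_sub' (fun j : ℕ => 1/(6*((n:ℝ)+j)^6)) N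
    _ ≤ 1/(6*(n:ℝ)^6) := by
        have : (0:ℝ) ≤ 1/(6*((n:ℝ)+N)^6) := by positivity
        simp only [Nat.cast_zero, add_zero]
        linarith

lemma tail_lower (n : ℕ) : 1/(6*((n:ℝ)+1)^6) ≤ ∑' j : ℕ, 1/(((n:ℝ)+1+j))^7 := by
  have hsum := summ_shift n
  have key : ∀ j : ℕ, 1/(6*((n:ℝ)+1+j)^6) - 1/(6*((n:ℝ)+1+(j+1:ℕ))^6) ≤ 1/(((n:ℝ)+1+j))^7 := by
    intro j
    have := tele2 ((n:ℝ)+1+j) (by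
      have h1 : (0:ℝ) ≤ (n:ℝ) := Nat.cast_nonneg n
      have h2 : (0:ℝ) ≤ (j:ℝ) := Nat.cast_nonneg j
      linarith)
    convert this using 2 <;> push_cast <;> ring
  have partial_lb : ∀ N : ℕ, 1/(6*((n:ℝ)+1+(0:ℕ))^6) - 1/(6*((n:ℝ)+1+N)^6) ≤
      ∑' j : ℕ, 1/(((n:ℝ)+1+j))^7 := by
    intro N
    calc 1/(6*((n:ℝ)+1+(0:ℕ))^6) - 1/(6*((n:ℝ)+1+N)^6)
        = ∑ j ∈ Finset.range N, (1/(6*((n:ℝ)+1+j)^6) - 1/(6*((n:ℝ)+1+(j+1:ℕ))^6)) :=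
          (Finset.sum_range_sub' (fun j : ℕ => 1/(6*((n:ℝ)+1+j)^6)) N).symm
      _ ≤ ∑ j ∈ Finset.range N, 1/(((n:ℝ)+1+j))^7 := Finset.sum_le_sum fun j _ => key j
      _ ≤ ∑' j : ℕ, 1/(((n:ℝ)+1+j))^7 :=
          Summable.sum_le_tsum _ (fun j _ => by positivity) hsum
  have hb : ∀ N : ℕ, 1/(6*((n:ℝ)+1+N)^6) ≤ 1/((N:ℝ)+1) := by
    intro N
    have hN1 : (1:ℝ) ≤ (n:ℝ)+1+N := by
      have h1 : (0:ℝ) ≤ (n:ℝ) := Nat.cast_nonneg n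
      have h2 : (0:ℝ) ≤ (N:ℝ) := Nat.cast_nonneg N
      linarith
    have hs : (n:ℝ)+1+N ≤ ((n:ℝ)+1+N)^6 := le_self_pow₀ hN1 (by norm_num)
    apply one_div_le_one_div_of_le (by positivity)
    have h2 : (0:ℝ) ≤ (n:ℝ) := Nat.cast_nonneg n
    nlinarith
  have h1 : Tendsto (fun N : ℕ => 1/(6*((n:ℝ)+1+N)^6)) atTop (𝓝 0) :=
    squeeze_zero (fun N => by positivity) hb tendsto_one_div_add_atTop_nhds_zero_nat
  have hlim : Tendsto (fun N : ℕ => 1/(6*((n:ℝ)+1+(0:ℕ))^6) - 1/(6*((n:ℝ)+1+N)^6)) atTop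
      (𝓝 (1/(6*((n:ℝ)+1+(0:ℕ))^6))) := by
    simpa using tendsto_const_nhds.sub h1
  have := le_of_tendsto hlim (Filter.Eventually.of_forall partial_lb)
  simpa using this

lemma ratio_tendsto (a b : ℝ) :
    Tendsto (fun n : ℕ => ((n:ℝ)+a)/((n:ℝ)+b)) atTop (𝓝 1) := by
  have hb : Tendsto (fun n : ℕ => (n:ℝ)+b) atTop atTop :=
    tendsto_atTop_add_const_right atTop b tendsto_natCast_atTop_atTop
  have h0 : Tendsto (fun n : ℕ => ((n:ℝ)+b)⁻¹) atTop (𝓝 0) := hb.inv_tendsto_atTop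
  have h1 : Tendsto (fun n : ℕ => 1 + (a-b) * ((n:ℝ)+b)⁻¹) atTop (𝓝 1) := by
    have := (tendsto_const_nhds : Tendsto (fun _ : ℕ => (1:ℝ)) atTop (𝓝 1)).add (h0.const_mul (a-b))
    simpa using this
  apply h1.congr'
  filter_upwards [hb.eventually_gt_atTop 0] with n hn
  field_simp
  ring

lemma Ibounds (n j : ℕ) (hn : 1 ≤ n) :
    (1/7) * (1/(((n:ℝ)+1+j))^7) ≤
      (∫ t in (0:ℝ)..1, t^6 / (((n:ℝ)+1+j) * (((n:ℝ)+1+j)^2 - t^2)^3)) ∧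
    (∫ t in (0:ℝ)..1, t^6 / (((n:ℝ)+1+j) * (((n:ℝ)+1+j)^2 - t^2)^3)) ≤
      (1/7) * (1/(((n:ℝ)+j))^7) := by
  have hk : (2:ℝ) ≤ (n:ℝ)+1+j := by
    have h1 : (1:ℝ) ≤ (n:ℝ) := by exact_mod_cast hn
    have h2 : (0:ℝ) ≤ (j:ℝ) := Nat.cast_nonneg j
    linarith
  have h := intbounds ((n:ℝ)+1+j) hk
  constructor
  · refine le_trans (le_of_eq ?_) h.1
    rw [div_mul_div_comm]; norm_num
  · refine h.2.trans (le_of_eq ?_)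
    rw [div_mul_div_comm]; norm_num
    congr 2
    ring

lemma summI (n : ℕ) (hn : 1 ≤ n) :
    Summable (fun j : ℕ =>
      ∫ t in (0:ℝ)..1, t^6 / (((n:ℝ)+1+j) * (((n:ℝ)+1+j)^2 - t^2)^3)) := by
  have hup : Summable (fun j : ℕ => (1/7) * (1/(((n:ℝ)+j))^7)) := by
    have h := (summ_shift (n-1)).mul_left (1/7)
    refine h.congr fun j => ?_
    congr 3
    have : ((n-1:ℕ):ℝ) = (n:ℝ) - 1 := by
      rw [Nat.cast_sub hn]; norm_num
    rw [this]; ring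
  apply Summable.of_nonneg_of_le (fun j => ?_) (fun j => (Ibounds n j hn).2) hup
  have hpos : (0:ℝ) < (1/7) * (1/(((n:ℝ)+1+j))^7) := by
    have h2 : (0:ℝ) ≤ (j:ℝ) := Nat.cast_nonneg j
    have h1 : (1:ℝ) ≤ (n:ℝ) := by exact_mod_cast hn
    positivity
  linarith [(Ibounds n j hn).1]

lemma S_lb (N : ℕ) (hN : 1 ≤ N) :
    (1/7)*(1/(6*((N:ℝ)+1)^6)) ≤
      ∑' j : ℕ, ∫ t in (0:ℝ)..1, t^6 / (((N:ℝ)+1+j) * (((N:ℝ)+1+j)^2 - t^2)^3) := by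
  have hsl : Summable (fun j : ℕ => (1/7) * (1/(((N:ℝ)+1+j))^7)) :=
    (summ_shift N).mul_left (1/7)
  calc (1/7)*(1/(6*((N:ℝ)+1)^6))
      ≤ (1/7) * ∑' j : ℕ, 1/(((N:ℝ)+1+j))^7 :=
        mul_le_mul_of_nonneg_left (tail_lower N) (by norm_num)
    _ = ∑' j : ℕ, (1/7) * (1/(((N:ℝ)+1+j))^7) := (tsum_mul_left).symm
    _ ≤ _ := Summable.tsum_le_tsum (fun j => (Ibounds N j hN).1) hsl (summI N hN)

lemma S_ub (N : ℕ) (hN : 2 ≤ N) :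
    (∑' j : ℕ, ∫ t in (0:ℝ)..1, t^6 / (((N:ℝ)+1+j) * (((N:ℝ)+1+j)^2 - t^2)^3))
      ≤ (1/7)*(1/(6*((N:ℝ)-1)^6)) := by
  have hcast : (((N-1:ℕ)):ℝ) = (N:ℝ) - 1 := by
    rw [Nat.cast_sub (by omega)]; norm_num
  have hsu : Summable (fun j : ℕ => (1/7) * (1/(((N:ℝ)+j))^7)) := by
    refine ((summ_shift (N-1)).mul_left (1/7)).congr fun j => ?_
    rw [hcast]; ring_nf
  calc (∑' j : ℕ, ∫ t in (0:ℝ)..1, t^6 / (((N:ℝ)+1+j) * (((N:ℝ)+1+j)^2 - t^2)^3))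
      ≤ ∑' j : ℕ, (1/7) * (1/(((N:ℝ)+j))^7) :=
        Summable.tsum_le_tsum (fun j => (Ibounds N j (by omega)).2) (summI N (by omega)) hsu
    _ = (1/7) * ∑' j : ℕ, 1/(((N:ℝ)+j))^7 := tsum_mul_left
    _ ≤ (1/7)*(1/(6*((N:ℝ)-1)^6)) := by
        apply mul_le_mul_of_nonneg_left ?_ (by norm_num)
        have h := tail_upper (N-1) (by omega)
        rw [hcast] at h
        calc ∑' j : ℕ, 1/(((N:ℝ)+j))^7
            = ∑' j : ℕ, 1/(((N:ℝ)-1+1+j))^7 := by norm_num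
          _ ≤ 1/(6*((N:ℝ)-1)^6) := h

/-- Asymptotics of the integral remainder:
with `Rₙ = (8/15)·∑_{k=n+1}^∞ ∫₀¹ t⁶/(k(k²−t²)³) dt`, one has `m³·Rₙ → 1/630`. -/
theorem remainder_asymptotic :
    Tendsto (fun n : ℕ =>
        ((n : ℝ) * (n + 1) / 2) ^ 3 *
          ((8 / 15) * ∑' j : ℕ,
            ∫ t in (0:ℝ)..1, t ^ 6 / ((n + 1 + j) * (((n : ℝ) + 1 + j) ^ 2 - t ^ 2) ^ 3)))
      atTop (𝓝 (1 / 630)) := by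
  apply (tendsto_add_atTop_iff_nat 2).1
  have hL : Tendsto (fun n : ℕ => (1/630) * (((n:ℝ)+2)/((n:ℝ)+3))^3) atTop
      (𝓝 (1/630)) := by
    have := ((ratio_tendsto 2 3).pow 3).const_mul (1/630 : ℝ)
    simpa using this
  have hU : Tendsto (fun n : ℕ =>
      (1/630) * ((((n:ℝ)+2)/((n:ℝ)+1)) * (((n:ℝ)+3)/((n:ℝ)+1)))^3) atTop
      (𝓝 (1/630)) := by
    have := (((ratio_tendsto 2 1).mul (ratio_tendsto 3 1)).pow 3).const_mul (1/630 : ℝ)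
    simpa using this
  refine tendsto_of_tendsto_of_tendsto_of_le_of_le hL hU (fun n => ?_) (fun n => ?_)
  · -- lower bound
    have hS := S_lb (n+2) (by omega)
    have hx : (0:ℝ) ≤ (n:ℝ) := Nat.cast_nonneg n
    have hC : (0:ℝ) ≤ (((n+2:ℕ):ℝ) * (((n+2:ℕ):ℝ)+1) / 2)^3 := by positivity
    have key := mul_le_mul_of_nonneg_left
      (mul_le_mul_of_nonneg_left hS (by norm_num : (0:ℝ) ≤ 8/15)) hC
    refine le_trans (le_of_eq ?_) key
    push_cast
    have h3 : ((n:ℝ)+3) ≠ 0 := by positivity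
    field_simp
    ring
  · have hS := S_ub (n+2) (by omega)
    have hx : (0:ℝ) ≤ (n:ℝ) := Nat.cast_nonneg n
    have hC : (0:ℝ) ≤ (((n+2:ℕ):ℝ) * (((n+2:ℕ):ℝ)+1) / 2)^3 := by positivity
    have key := mul_le_mul_of_nonneg_left
      (mul_le_mul_of_nonneg_left hS (by norm_num : (0:ℝ) ≤ 8/15)) hC
    refine le_trans key (le_of_eq ?_)
    push_cast
    have h1 : ((n:ℝ)+1) ≠ 0 := by positivity
    rw [show ((n:ℝ)+2-1) = (n:ℝ)+1 by ring]
    field_simp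
    ring
end
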